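/- arXiv:2208.12926 — 4 statements merged into one kernel-verified Lean document; each statement's English description precedes it below -/
import Mathlib

section
/- Let n ∈ ℕ and ε > 0. Let X be a probability distribution on 𝔽₂ⁿ with min-entropy H_∞(X) ≥ 2·log₂(1/ε), and let Y be uniformly distributed on 𝔽₂ⁿ and independent of X. Then the statistical distance between the joint distribution (Y, ⟨X, Y⟩) and the uniform distribution on 𝔽₂ⁿ × 𝔽₂ is at most ε, where ⟨x, y⟩ = ∑ᵢ xᵢyᵢ computed in 𝔽₂. -/
open Finset

/-- Statistical distance between two (mass functions of) distributions on a finite set. -/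
noncomputable def SD {Ω : Type*} [Fintype Ω] (p q : Ω → ℝ) : ℝ :=
  (∑ ω, |p ω - q ω|) / 2

/-- Min-entropy of a distribution on a finite set: `-log₂ (max_ω p ω)`. -/
noncomputable def minEntropy {Ω : Type*} [Fintype Ω] (p : Ω → ℝ) : ℝ :=
  - Real.logb 2 (⨆ ω, p ω)

/-- Inner product over 𝔽₂. -/
def ip {n : ℕ} (x y : Fin n → ZMod 2) : ZMod 2 := ∑ i, x i * y i

/-! ### Auxiliary lemmas -/

/-- The real-valued character of `ZMod 2`. -/
noncomputable def chr (a : ZMod 2) : ℝ := if a = 0 then 1 else -1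

lemma zmod2_cases : ∀ a : ZMod 2, a = 0 ∨ a = 1 := by decide

lemma chr_add (a b : ZMod 2) : chr (a + b) = chr a * chr b := by
  have h11 : (1 : ZMod 2) + 1 = 0 := by decide
  rcases zmod2_cases a with ha | ha <;> rcases zmod2_cases b with hb | hb <;>
    subst ha <;> subst hb <;> norm_num [chr, h11] <;> decide

lemma sum_zmod2 {M : Type*} [AddCommMonoid M] (g : ZMod 2 → M) : ∑ b, g b = g 0 + g 1 := by
  have h : (univ : Finset (ZMod 2)) = {0, 1} := by decide
  rw [h, Finset.sum_insert (by decide), Finset.sum_singleton]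

lemma ip_add_right {n : ℕ} (z y v : Fin n → ZMod 2) : ip z (y + v) = ip z y + ip z v := by
  simp [ip, mul_add, Finset.sum_add_distrib]

lemma ip_add_left {n : ℕ} (x x' y : Fin n → ZMod 2) : ip (x + x') y = ip x y + ip x' y := by
  simp [ip, add_mul, Finset.sum_add_distrib]

lemma sum_chr {n : ℕ} (z : Fin n → ZMod 2) :
    ∑ y : Fin n → ZMod 2, chr (ip z y) = if z = 0 then (2:ℝ)^n else 0 := by
  split_ifs with hz
  · subst hz
    have h0 : ∀ y : Fin n → ZMod 2, ip (0 : Fin n → ZMod 2) y = 0 := by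
      intro y; simp [ip]
    simp only [h0]
    simp [chr, Finset.card_univ]
  · obtain ⟨i, hi⟩ : ∃ i, z i ≠ 0 := by
      by_contra h; push_neg at h; exact hz (funext h)
    have hzi : z i = 1 := (zmod2_cases (z i)).resolve_left hi
    have hsingle : ip z (Pi.single i 1) = 1 := by
      simp only [ip, Pi.single_apply, mul_ite, mul_one, mul_zero]
      rw [Finset.sum_ite_eq' univ i z]
      simp [hzi]
    have key : ∀ y, chr (ip z (y + Pi.single i 1)) = - chr (ip z y) := by
      intro y
      rw [ip_add_right, hsingle, chr_add]
      have : chr 1 = -1 := by norm_num [chr]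
      rw [this]; ring
    have h2 : ∑ y : Fin n → ZMod 2, chr (ip z y)
        = ∑ y : Fin n → ZMod 2, chr (ip z (y + Pi.single i 1)) :=
      (Fintype.sum_equiv (Equiv.addRight (Pi.single i 1)) _ _ (fun y => rfl)).symm
    simp only [key, Finset.sum_neg_distrib] at h2
    linarith

lemma add_eq_zero_iff_zmod2 {n : ℕ} (x x' : Fin n → ZMod 2) : x + x' = 0 ↔ x' = x := by
  have hself : ∀ v : Fin n → ZMod 2, v + v = 0 := by
    intro v; funext j
    have : ∀ a : ZMod 2, a + a = 0 := by decide
    exact this (v j)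
  constructor
  · intro h
    have h2 : x + (x + x') = x + 0 := by rw [h]
    rwa [← add_assoc, hself x, zero_add, add_zero] at h2
  · intro h; subst h; exact hself _

lemma parseval {n : ℕ} (X : (Fin n → ZMod 2) → ℝ) :
    ∑ y : Fin n → ZMod 2, (∑ x, chr (ip x y) * X x)^2 = 2^n * ∑ x, (X x)^2 := by
  have hexp : ∀ y : Fin n → ZMod 2, (∑ x, chr (ip x y) * X x)^2
      = ∑ x, ∑ x', chr (ip (x + x') y) * (X x * X x') := by
    intro y
    rw [sq, Finset.sum_mul_sum]
    refine Finset.sum_congr rfl fun x _ => Finset.sum_congr rfl fun x' _ => ?_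
    rw [ip_add_left, chr_add]; ring
  simp only [hexp]
  rw [Finset.sum_comm]
  have : ∀ x : Fin n → ZMod 2, ∑ y : Fin n → ZMod 2, ∑ x', chr (ip (x + x') y) * (X x * X x')
      = 2^n * (X x)^2 := by
    intro x
    rw [Finset.sum_comm]
    have hx' : ∀ x' : Fin n → ZMod 2,
        ∑ y : Fin n → ZMod 2, chr (ip (x + x') y) * (X x * X x')
          = (if x' = x then (2:ℝ)^n * (X x * X x') else 0) := by
      intro x'
      rw [← Finset.sum_mul, sum_chr]
      simp only [add_eq_zero_iff_zmod2, ite_mul, zero_mul]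
    simp only [hx']
    rw [Finset.sum_ite_eq' univ x (fun x' => ((2:ℝ)^n) * (X x * X x'))]
    simp only [Finset.mem_univ, if_true, sq]
  simp only [this]
  rw [← Finset.mul_sum]

/-- **Inner product is a good extractor.**  If `X` is a distribution on 𝔽₂ⁿ with
`H_∞(X) ≥ 2 log₂(1/ε)` and `Y` is uniform on 𝔽₂ⁿ, independent of `X`, then the joint
distribution `(Y, ⟨X,Y⟩)` is `ε`-close in statistical distance to uniform on 𝔽₂ⁿ × 𝔽₂. -/
theorem inner_product_extractor (n : ℕ) (ε : ℝ) (hε : 0 < ε)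
    (X : (Fin n → ZMod 2) → ℝ)
    (hX0 : ∀ x, 0 ≤ X x) (hX1 : ∑ x, X x = 1)
    (hent : 2 * Real.logb 2 (1 / ε) ≤ minEntropy X) :
    SD (fun yb : (Fin n → ZMod 2) × ZMod 2 =>
          (1 / 2 ^ n) * ∑ x, if ip x yb.1 = yb.2 then X x else 0)
        (fun _ => 1 / 2 ^ (n + 1)) ≤ ε := by
  classical
  have h2n : (0:ℝ) < 2 ^ n := by positivity
  set f : (Fin n → ZMod 2) → ℝ := fun y => ∑ x, chr (ip x y) * X x with hf
  -- Step A: bound on the sup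
  have hbdd : BddAbove (Set.range X) := Set.Finite.bddAbove (Set.finite_range X)
  have hle : ∀ x, X x ≤ ⨆ x, X x := fun x => le_ciSup hbdd x
  have hSpos : 0 < ⨆ x, X x := by
    obtain ⟨x, hx⟩ : ∃ x, 0 < X x := by
      by_contra h; push_neg at h
      have : ∑ x, X x ≤ 0 := Finset.sum_nonpos (fun x _ => h x)
      rw [hX1] at this; linarith
    exact lt_of_lt_of_le hx (hle x)
  have hS : (⨆ x, X x) ≤ ε ^ 2 := by
    have hlogle : Real.logb 2 (⨆ x, X x) ≤ Real.logb 2 (ε ^ 2) := by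
      unfold minEntropy at hent
      rw [one_div, Real.logb_inv] at hent
      rw [Real.logb_pow]
      push_cast
      linarith
    calc (⨆ x, X x) = (2:ℝ) ^ Real.logb 2 (⨆ x, X x) :=
            (Real.rpow_logb (by norm_num) (by norm_num) hSpos).symm
      _ ≤ (2:ℝ) ^ Real.logb 2 (ε ^ 2) :=
            (Real.rpow_le_rpow_left_iff (by norm_num : (1:ℝ) < 2)).2 hlogle
      _ = ε ^ 2 := Real.rpow_logb (by norm_num) (by norm_num) (by positivity)
  -- Step B: SD rewritten via f
  have hsum : ∀ y : Fin n → ZMod 2,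
      ∑ b : ZMod 2, |(1 / 2 ^ n) * (∑ x, if ip x y = b then X x else 0) - 1 / 2 ^ (n+1)|
        = (1 / 2 ^ n) * |f y| := by
    intro y
    rw [sum_zmod2 (fun b => |(1 / 2 ^ n) * (∑ x, if ip x y = b then X x else 0) - 1 / 2 ^ (n+1)|)]
    set A := ∑ x, if ip x y = 0 then X x else 0 with hA
    set B := ∑ x, if ip x y = 1 then X x else 0 with hB
    have hAB : A + B = 1 := by
      rw [hA, hB, ← Finset.sum_add_distrib, ← hX1]
      refine Finset.sum_congr rfl fun x _ => ?_
      rcases zmod2_cases (ip x y) with h | h <;> simp [h]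
    have hfy : f y = A - B := by
      rw [hf, hA, hB]
      simp only
      rw [← Finset.sum_sub_distrib]
      refine Finset.sum_congr rfl fun x _ => ?_
      rcases zmod2_cases (ip x y) with h | h <;> simp [h, chr]
    have e1 : (1 / 2 ^ n : ℝ) * A - 1 / 2 ^ (n+1) = (1 / 2 ^ (n+1)) * (A - B) := by
      linear_combination (1 / 2 ^ (n+1) : ℝ) * hAB
    have e2 : (1 / 2 ^ n : ℝ) * B - 1 / 2 ^ (n+1) = (1 / 2 ^ (n+1)) * (B - A) := by
      linear_combination (1 / 2 ^ (n+1) : ℝ) * hAB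
    rw [e1, e2, abs_mul, abs_mul, hfy]
    have habs : |B - A| = |A - B| := abs_sub_comm B A
    rw [habs]
    have hp : |(1 / 2 ^ (n+1) : ℝ)| = 1 / 2 ^ (n+1) := abs_of_pos (by positivity)
    rw [hp]
    have h2 : (2:ℝ) ^ (n+1) = 2 * 2 ^ n := by ring
    rw [h2]; ring
  have hSD : SD (fun yb : (Fin n → ZMod 2) × ZMod 2 =>
          (1 / 2 ^ n) * ∑ x, if ip x yb.1 = yb.2 then X x else 0)
        (fun _ => 1 / 2 ^ (n + 1)) = (1 / 2 ^ (n+1)) * ∑ y, |f y| := by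
    unfold SD
    rw [Fintype.sum_prod_type]
    simp only [hsum]
    rw [← Finset.mul_sum]
    have h2 : (2:ℝ) ^ (n+1) = 2 * 2 ^ n := by ring
    rw [h2]; ring
  -- Step C: Cauchy–Schwarz
  have hCS : (∑ y, |f y|)^2 ≤ 2^n * ∑ y, (f y)^2 := by
    have h := Finset.sum_mul_sq_le_sq_mul_sq univ (fun _ => (1:ℝ)) (fun y => |f y|)
    simp only [one_mul, one_pow, sq_abs] at h
    calc (∑ y, |f y|)^2 ≤ (∑ _y : Fin n → ZMod 2, (1:ℝ)) * ∑ y, (f y)^2 := h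
      _ = 2^n * ∑ y, (f y)^2 := by
          rw [Finset.sum_const, Finset.card_univ]
          norm_num
  -- Step D: Parseval
  have hPar : ∑ y, (f y)^2 = 2^n * ∑ x, (X x)^2 := parseval X
  -- Step E: collision bound
  have hX2 : ∑ x, (X x)^2 ≤ ε^2 := by
    calc ∑ x, (X x)^2 ≤ ∑ x, (⨆ x, X x) * X x := by
          refine Finset.sum_le_sum fun x _ => ?_
          have := hle x; have := hX0 x; nlinarith
      _ = (⨆ x, X x) * 1 := by rw [← Finset.mul_sum, hX1]
      _ ≤ ε^2 := by rw [mul_one]; exact hS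
  have habs : ∑ y, |f y| ≤ 2^n * ε := by
    have h1 : (∑ y, |f y|)^2 ≤ (2^n * ε)^2 := by
      calc (∑ y, |f y|)^2 ≤ 2^n * ∑ y, (f y)^2 := hCS
        _ = 2^n * (2^n * ∑ x, (X x)^2) := by rw [hPar]
        _ ≤ 2^n * (2^n * ε^2) :=
            mul_le_mul_of_nonneg_left (mul_le_mul_of_nonneg_left hX2 h2n.le) h2n.le
        _ = (2^n * ε)^2 := by ring
    have hnn : (0:ℝ) ≤ ∑ y, |f y| := Finset.sum_nonneg fun y _ => abs_nonneg _
    exact (pow_le_pow_iff_left₀ hnn (by positivity) (by norm_num)).1 h1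
  rw [hSD]
  have h2 : (2:ℝ) ^ (n+1) = 2 * 2 ^ n := by ring
  calc (1 / 2 ^ (n+1)) * ∑ y, |f y| ≤ (1 / 2 ^ (n+1)) * (2^n * ε) := by
        apply mul_le_mul_of_nonneg_left habs (by positivity)
    _ = ε / 2 := by rw [h2]; field_simp
    _ ≤ ε := by linarith
end

section
/- Let ℓ, n, k ∈ ℕ with k ≤ n ≤ 2^ℓ, R = k/n, 0 ≤ s ≤ n, and k′ ≥ 0. Let c be a uniform codeword of the Reed–Solomon code over 𝔽_{2^ℓ} with dimension k and block length n, let ρ be the random-subset noise on s coordinates, and let D be any distribution on 𝔽_{2^ℓ}ⁿ with H_∞(D) ≥ k′, where c, ρ and D are mutually independent. Then the statistical distance between c + ρ + D (coordinatewise addition in 𝔽_{2^ℓ}) and the uniform distribution on 𝔽_{2^ℓ}ⁿ is at most 2^{(nℓ − k′)/2 − 1}·(1 − R)^s. -/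
open Finset

/-- Reed–Solomon encoding with dimension `k`, block length `n` and (distinct)
evaluation points `a : Fin n → F`:  `m ↦ (f_m(a₁), …, f_m(a_n))`. -/
def rsEnc {F : Type*} [Field F] (k n : ℕ) (a : Fin n → F) (m : Fin k → F) : Fin n → F :=
  fun i => ∑ j : Fin k, m j * a i ^ (j : ℕ)

/-- Mass function of a uniform Reed–Solomon codeword (encoding of a uniform message). -/
noncomputable def encDist {F : Type*} [Field F] [Fintype F] [DecidableEq F]
    (k n : ℕ) (a : Fin n → F) : (Fin n → F) → ℝ :=
  fun w => ∑ m : Fin k → F,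
    (1 / (Fintype.card F : ℝ) ^ k) * (if rsEnc k n a m = w then 1 else 0)

/-- Mass function of the random-subset noise on `s` coordinates: a uniform size-`s`
subset `S ⊆ {1,…,n}` gets independent uniform field elements, other coordinates are 0. -/
noncomputable def noiseDist {F : Type*} [Field F] [Fintype F] [DecidableEq F]
    (n s : ℕ) : (Fin n → F) → ℝ :=
  fun w => ∑ S ∈ Finset.powersetCard s (Finset.univ : Finset (Fin n)), ∑ e : Fin n → F,
    (1 / (n.choose s : ℝ)) * (1 / (Fintype.card F : ℝ) ^ n) *
      (if (fun i => if i ∈ S then e i else 0) = w then 1 else 0)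

/-! Take a nontrivial character `ψ : 𝔽 → {±1} ⊆ ℝ`; it exists because the characteristic is 2.
At `y ≠ 0` the Fourier coefficient of the law of `c + ρ + D` is the product of three
coefficients: that of the codeword is the indicator of the dual code, that of the noise is
`C(#{i | yᵢ = 0}, s) / C(n, s)`, and a nonzero dual codeword has more than `k` nonzero
coordinates, so the first two multiply to at most `(1 - k/n)^s`. Cauchy–Schwarz and Parseval bound
`(2·SD)²` by the sum of the squared nonzero coefficients, hence by
`(1 - k/n)^(2s) · 2^(nℓ) · ∑ D²`, and `∑ D² ≤ max D ≤ 2^(-k')`. -/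

namespace MaskedCodeword

section Characters

variable {F : Type*} [Field F]

theorem exists_addChar_ne_one [Finite F] [CharP F 2] : ∃ ψ : AddChar F ℝ, ψ ≠ 1 := by
  let _ : Algebra (ZMod 2) F := ZMod.algebra F 2
  obtain ⟨φ, hφ⟩ : ∃ φ : Module.Dual (ZMod 2) F, φ 1 ≠ 0 := by
    by_contra! h
    exact one_ne_zero ((Module.forall_dual_apply_eq_zero_iff (ZMod 2) (1 : F)).mp h)
  have hsign : (-1 : ℝ) ^ 2 = 1 := by norm_num
  refine ⟨(AddChar.zmodChar 2 hsign).compAddMonoidHom φ.toAddMonoidHom,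
    AddChar.ne_one_iff.2 ⟨1, ?_⟩⟩
  have hφ1 : φ 1 = 1 := (by decide : ∀ b : ZMod 2, b ≠ 0 → b = 1) _ hφ
  norm_num [AddChar.zmodChar_apply, hφ1, ZMod.val_one]

variable {n : ℕ} (ψ : AddChar F ℝ)

def dotChar (y : Fin n → F) : AddChar (Fin n → F) ℝ :=
  ψ.compAddMonoidHom (AddMonoidHom.mk' (y ⬝ᵥ ·) (dotProduct_add y))

theorem dotChar_eq_zero_iff (hψ : ψ ≠ 1) (y : Fin n → F) : dotChar ψ y = 0 ↔ y = 0 := by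
  refine ⟨fun h => ?_, fun h => by ext w; simp [dotChar, h]⟩
  by_contra hy
  obtain ⟨i, hi⟩ := Function.ne_iff.mp hy
  obtain ⟨x, hx⟩ := AddChar.ne_one_iff.mp hψ
  apply hx
  simpa [dotChar, dotProduct_single, mul_div_cancel₀ _ hi] using
    DFunLike.congr_fun h (Pi.single i (x / y i))

theorem sum_addChar_dotProduct [Fintype F] [DecidableEq F] (hψ : ψ ≠ 1) (y : Fin n → F) :
    ∑ w, ψ (y ⬝ᵥ w) = if y = 0 then (Fintype.card F : ℝ) ^ n else 0 := by
  classical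
  have := (dotChar ψ y).sum_eq_ite
  simp only [dotChar_eq_zero_iff ψ hψ, Fintype.card_fun, Fintype.card_fin, Nat.cast_pow] at this
  simpa [dotChar] using this

end Characters

section Fourier

variable {F : Type*} [Field F] [Fintype F] {n : ℕ} (ψ : AddChar F ℝ)

def fourier (p : (Fin n → F) → ℝ) (y : Fin n → F) : ℝ := ∑ w, p w * ψ (y ⬝ᵥ w)

theorem fourier_zero_right (p : (Fin n → F) → ℝ) : fourier ψ p 0 = ∑ w, p w := by
  simp [fourier]

theorem fourier_sub_const [DecidableEq F] (hψ : ψ ≠ 1) (p : (Fin n → F) → ℝ) (c : ℝ)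
    {y : Fin n → F} (hy : y ≠ 0) : fourier ψ (fun w => p w - c) y = fourier ψ p y := by
  simp [fourier, sub_mul, sum_sub_distrib, ← mul_sum, sum_addChar_dotProduct ψ hψ, hy]

theorem fourier_sum_indicator [DecidableEq F] {ι : Type*} (t : Finset ι) (c : ι → ℝ)
    (L : ι → Fin n → F) (y : Fin n → F) :
    fourier ψ (fun w => ∑ i ∈ t, c i * if L i = w then 1 else 0) y
      = ∑ i ∈ t, c i * ψ (y ⬝ᵥ L i) := by
  simp only [fourier, sum_mul]
  rw [sum_comm]
  simp

theorem fourier_conv₃ (p q r : (Fin n → F) → ℝ) (y : Fin n → F) :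
    fourier ψ (fun w => ∑ u, ∑ v, p u * q v * r (w - u - v)) y
      = fourier ψ p y * fourier ψ q y * fourier ψ r y := by
  have hshift : ∀ u v, ∑ w, r (w - u - v) * ψ (y ⬝ᵥ w)
      = fourier ψ r y * ψ (y ⬝ᵥ u) * ψ (y ⬝ᵥ v) := fun u v => by
    rw [fourier, sum_mul, sum_mul]
    refine Fintype.sum_equiv (Equiv.subRight (u + v)) _ _ fun w => ?_
    rw [Equiv.subRight_apply, mul_assoc, mul_assoc, ← AddChar.map_add_eq_mul,
      ← AddChar.map_add_eq_mul, ← dotProduct_add, ← dotProduct_add, sub_add_cancel, sub_sub]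
  calc fourier ψ (fun w => ∑ u, ∑ v, p u * q v * r (w - u - v)) y
      = ∑ u, ∑ v, p u * q v * ∑ w, r (w - u - v) * ψ (y ⬝ᵥ w) := by
        simp only [fourier, sum_mul, mul_sum, mul_assoc]
        rw [sum_comm]
        exact sum_congr rfl fun u _ => sum_comm
    _ = fourier ψ p y * fourier ψ q y * fourier ψ r y := by
        simp only [hshift]
        generalize fourier ψ r y = R
        simp only [fourier]
        rw [sum_mul_sum, sum_mul]
        refine sum_congr rfl fun u _ => ?_
        rw [sum_mul]
        exact sum_congr rfl fun v _ => by ring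

theorem sum_sq_fourier [CharP F 2] [DecidableEq F] (hψ : ψ ≠ 1) (p : (Fin n → F) → ℝ) :
    ∑ y, fourier ψ p y ^ 2 = (Fintype.card F : ℝ) ^ n * ∑ w, p w ^ 2 := by
  have horth : ∀ w w' : Fin n → F,
      ∑ y, ψ (y ⬝ᵥ w) * ψ (y ⬝ᵥ w') = if w = w' then (Fintype.card F : ℝ) ^ n else 0 := by
    intro w w'
    have hneg : -w' = w' := funext fun i => CharTwo.neg_eq (w' i)
    simp only [← AddChar.map_add_eq_mul, ← dotProduct_add]
    simp only [dotProduct_comm _ (w + w')]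
    simp only [sum_addChar_dotProduct ψ hψ, add_eq_zero_iff_eq_neg, hneg]
  calc ∑ y, fourier ψ p y ^ 2
      = ∑ w, ∑ w', p w * p w' * ∑ y, ψ (y ⬝ᵥ w) * ψ (y ⬝ᵥ w') := by
        simp only [fourier, sq, sum_mul_sum]
        rw [sum_comm]
        refine sum_congr rfl fun w _ => ?_
        rw [sum_comm]
        refine sum_congr rfl fun w' _ => ?_
        rw [mul_sum]
        exact sum_congr rfl fun y _ => by ring
    _ = (Fintype.card F : ℝ) ^ n * ∑ w, p w ^ 2 := by
        simp [horth, mul_sum, sq, mul_comm]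

theorem sq_two_mul_SD_uniform_le [CharP F 2] [DecidableEq F] (hψ : ψ ≠ 1)
    (P : (Fin n → F) → ℝ) (hP : ∑ w, P w = 1) :
    (2 * SD P (fun _ => 1 / (Fintype.card F : ℝ) ^ n)) ^ 2
      ≤ ∑ y ∈ univ.erase 0, fourier ψ P y ^ 2 := by
  set q : ℝ := (Fintype.card F : ℝ) ^ n with hq
  set g : (Fin n → F) → ℝ := fun w => P w - 1 / q
  have hg0 : fourier ψ g 0 = 0 := by
    have : q ≠ 0 := by positivity
    simp [fourier_zero_right, g, sum_sub_distrib, hP, q, this]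
  calc (2 * SD P (fun _ => 1 / q)) ^ 2 = (∑ w, |g w|) ^ 2 := by simp only [SD, g]; ring
    _ ≤ q * ∑ w, g w ^ 2 := by
        simpa [q, sq_abs] using sq_sum_le_card_mul_sum_sq (s := univ) (f := fun w => |g w|)
    _ = ∑ y, fourier ψ g y ^ 2 := (sum_sq_fourier ψ hψ g).symm
    _ = ∑ y ∈ univ.erase 0, fourier ψ P y ^ 2 := by
        rw [← add_sum_erase _ _ (mem_univ 0), hg0, sq, zero_mul, zero_add]
        exact sum_congr rfl fun y hy => by rw [fourier_sub_const ψ hψ P _ (ne_of_mem_erase hy)]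

theorem sq_two_mul_SD_uniform_le_of_abs_fourier_le [CharP F 2] [DecidableEq F] (hψ : ψ ≠ 1)
    {P D : (Fin n → F) → ℝ} (hP : ∑ w, P w = 1) {β : ℝ}
    (hPD : ∀ y ≠ 0, |fourier ψ P y| ≤ β * |fourier ψ D y|) :
    (2 * SD P (fun _ => 1 / (Fintype.card F : ℝ) ^ n)) ^ 2
      ≤ β ^ 2 * ((Fintype.card F : ℝ) ^ n * ∑ w, D w ^ 2) := by
  calc (2 * SD P (fun _ => 1 / (Fintype.card F : ℝ) ^ n)) ^ 2
      ≤ ∑ y ∈ univ.erase 0, fourier ψ P y ^ 2 := sq_two_mul_SD_uniform_le ψ hψ P hP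
    _ ≤ ∑ y ∈ univ.erase 0, β ^ 2 * fourier ψ D y ^ 2 := sum_le_sum fun y hy => by
        simpa only [mul_pow, sq_abs] using
          pow_le_pow_left₀ (abs_nonneg _) (hPD y (ne_of_mem_erase hy)) 2
    _ ≤ β ^ 2 * ∑ y, fourier ψ D y ^ 2 := by
        rw [mul_sum]
        exact sum_le_sum_of_subset_of_nonneg (erase_subset _ _) fun _ _ _ => by positivity
    _ = β ^ 2 * ((Fintype.card F : ℝ) ^ n * ∑ w, D w ^ 2) := by rw [sum_sq_fourier ψ hψ]

end Fourier

section ReedSolomon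

open Polynomial Matrix

variable {F : Type*} [Field F] {n k : ℕ} {a : Fin n → F}

def rsMatrix (k : ℕ) (a : Fin n → F) : Matrix (Fin n) (Fin k) F :=
  Matrix.of fun i j => a i ^ (j : ℕ)

theorem rsEnc_eq_mulVec (m : Fin k → F) : rsEnc k n a m = rsMatrix k a *ᵥ m := by
  ext i
  simp [rsEnc, rsMatrix, Matrix.mulVec, dotProduct, mul_comm]

theorem sum_mul_eval_eq_zero_of_vecMul_rsMatrix {y : Fin n → F} (hy : y ᵥ* rsMatrix k a = 0)
    {p : F[X]} (hp : p.natDegree < k) : ∑ i, y i * p.eval (a i) = 0 := by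
  have hcoeff : rsMatrix k a *ᵥ (fun j => p.coeff j) = fun i => p.eval (a i) := by
    ext i
    rw [eval_eq_sum_range' hp, ← Fin.sum_univ_eq_sum_range]
    simp [Matrix.mulVec, dotProduct, rsMatrix, mul_comm]
  simpa [hcoeff, hy, dotProduct] using dotProduct_mulVec y (rsMatrix k a) (fun j => p.coeff j)

/-- If `y` had at most `k` nonzero coordinates, the Lagrange basis polynomial of its support at
one of them would have degree `< k`, and testing `y` against it would return that coordinate. -/
theorem lt_card_filter_ne_zero_of_vecMul_rsMatrix [DecidableEq F] (ha : Function.Injective a)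
    {y : Fin n → F} (hy0 : y ≠ 0) (hy : y ᵥ* rsMatrix k a = 0) : k < #{i | y i ≠ 0} := by
  set T : Finset (Fin n) := {i | y i ≠ 0}
  obtain ⟨i₀, hi₀⟩ := Function.ne_iff.mp hy0
  have hi₀T : i₀ ∈ T := by simpa [T]
  by_contra! hTk
  have h := sum_mul_eval_eq_zero_of_vecMul_rsMatrix hy (p := Lagrange.basis T a i₀)
    (by have := card_pos.2 ⟨i₀, hi₀T⟩; rw [Lagrange.natDegree_basis ha.injOn hi₀T]; omega)
  rw [sum_eq_single i₀ (fun i _ hi => ?_) (by simp), Lagrange.eval_basis_self ha.injOn hi₀T,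
    mul_one] at h
  · exact hi₀ h
  by_cases hiT : i ∈ T
  · rw [Lagrange.eval_basis_of_ne (Ne.symm hi) hiT, mul_zero]
  · simp_all [T]

end ReedSolomon

section Bounds

theorem one_sub_div_nonneg_of_le {k n : ℕ} (h : k ≤ n) : (0 : ℝ) ≤ 1 - k / n :=
  sub_nonneg.2 (div_le_one_of_le₀ (by exact_mod_cast h) n.cast_nonneg)

theorem choose_mul_pow_le_choose_mul_pow {m n : ℕ} (hmn : m ≤ n) (s : ℕ) :
    m.choose s * n ^ s ≤ n.choose s * m ^ s := by
  induction s with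
  | zero => simp
  | succ s ih =>
    refine Nat.le_of_mul_le_mul_left ?_ s.succ_pos
    have hstep : (m - s) * n ≤ (n - s) * m := by
      rw [Nat.sub_mul, Nat.sub_mul, mul_comm n m]
      exact Nat.sub_le_sub_left (Nat.mul_le_mul_left s hmn) _
    calc (s + 1) * (m.choose (s + 1) * n ^ (s + 1))
        = (m.choose (s + 1) * (s + 1)) * n ^ (s + 1) := by ring
      _ = (m.choose s * n ^ s) * ((m - s) * n) := by rw [Nat.choose_succ_right_eq, pow_succ]; ring
      _ ≤ (n.choose s * m ^ s) * ((n - s) * m) := Nat.mul_le_mul ih hstep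
      _ = (n.choose s * (n - s)) * m ^ (s + 1) := by ring
      _ = (s + 1) * (n.choose (s + 1) * m ^ (s + 1)) := by rw [← Nat.choose_succ_right_eq]; ring

theorem choose_div_choose_le_one_sub_div_pow {n k z : ℕ} (h : z + k < n) (s : ℕ) :
    (z.choose s : ℝ) / n.choose s ≤ (1 - k / n) ^ s := by
  have hn : (0 : ℝ) < n := by exact_mod_cast (Nat.zero_le _).trans_lt h
  have hβ : 1 - (k : ℝ) / n = ((n - k : ℕ) : ℝ) / n := by
    rw [Nat.cast_sub (by omega)]
    field_simp
  rcases (n.choose s).eq_zero_or_pos with hC | hC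
  · rw [hC, Nat.cast_zero, div_zero, hβ]
    positivity
  have hz : z.choose s * n ^ s ≤ n.choose s * (n - k) ^ s :=
    (Nat.mul_le_mul_right _ (Nat.choose_le_choose s (by omega))).trans
      (choose_mul_pow_le_choose_mul_pow (Nat.sub_le n k) s)
  rw [hβ, div_pow, div_le_div_iff₀ (by exact_mod_cast hC) (by positivity)]
  rw [mul_comm (((n - k : ℕ) : ℝ) ^ s)]
  exact_mod_cast hz

theorem sum_sq_le_rpow_neg_of_le_minEntropy {Ω : Type*} [Fintype Ω] {p : Ω → ℝ}
    (h0 : ∀ ω, 0 ≤ p ω) (h1 : ∑ ω, p ω = 1) {k' : ℝ} (hk : k' ≤ minEntropy p) :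
    ∑ ω, p ω ^ 2 ≤ 2 ^ (-k') := by
  obtain ⟨ω₀, hω₀⟩ : ∃ ω, p ω ≠ 0 := by
    by_contra! h
    simp [h] at h1
  have hle : ∀ ω, p ω ≤ ⨆ ω, p ω := le_ciSup (Set.finite_range p).bddAbove
  have hmax : ⨆ ω, p ω ≤ 2 ^ (-k') := by
    have hpos : 0 < ⨆ ω, p ω := ((h0 ω₀).lt_of_ne' hω₀).trans_le (hle ω₀)
    rw [← Real.logb_le_iff_le_rpow one_lt_two hpos]
    rw [minEntropy] at hk
    linarith
  calc ∑ ω, p ω ^ 2 ≤ ∑ ω, (⨆ ω, p ω) * p ω :=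
        sum_le_sum fun ω _ => by rw [sq]; exact mul_le_mul_of_nonneg_right (hle ω) (h0 ω)
    _ = ⨆ ω, p ω := by rw [← mul_sum, h1, mul_one]
    _ ≤ 2 ^ (-k') := hmax

theorem le_two_rpow_mul_of_sq_two_mul_le {x β κ : ℝ} {N : ℕ} (hβ : 0 ≤ β)
    (h : (2 * x) ^ 2 ≤ β ^ 2 * (2 ^ N * 2 ^ (-κ))) : x ≤ 2 ^ (((N : ℝ) - κ) / 2 - 1) * β := by
  have hroot : (2 ^ (((N : ℝ) - κ) / 2) * β) ^ 2 = β ^ 2 * (2 ^ N * 2 ^ (-κ)) := by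
    rw [mul_pow, ← Real.rpow_mul_natCast zero_le_two, Nat.cast_two, div_mul_cancel₀ _ two_ne_zero,
      sub_eq_add_neg, Real.rpow_add two_pos, Real.rpow_natCast]
    ring
  have h2x := le_of_sq_le_sq (hroot ▸ h) (by positivity)
  rw [Real.rpow_sub two_pos, Real.rpow_one]
  linarith

end Bounds

section Distributions

open Matrix

variable {F : Type*} [Field F] [Fintype F] [DecidableEq F] {n : ℕ} (ψ : AddChar F ℝ)

theorem fourier_encDist (hψ : ψ ≠ 1) (k : ℕ) (a : Fin n → F) (y : Fin n → F) :
    fourier ψ (encDist k n a) y = if y ᵥ* rsMatrix k a = 0 then 1 else 0 := by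
  have hq : (Fintype.card F : ℝ) ^ k ≠ 0 := by positivity
  unfold encDist
  rw [fourier_sum_indicator]
  simp_rw [rsEnc_eq_mulVec, dotProduct_mulVec, ← mul_sum, sum_addChar_dotProduct ψ hψ]
  split_ifs <;> simp [hq]

theorem fourier_noiseDist (hψ : ψ ≠ 1) (s : ℕ) (y : Fin n → F) :
    fourier ψ (noiseDist n s) y = ((#{i | y i = 0}).choose s : ℝ) / n.choose s := by
  have hq : (Fintype.card F : ℝ) ^ n ≠ 0 := by positivity
  have hmask : ∀ (S : Finset (Fin n)) (e : Fin n → F),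
      y ⬝ᵥ (fun i => if i ∈ S then e i else 0) = (fun i => if i ∈ S then y i else 0) ⬝ᵥ e := by
    intro S e
    simp only [dotProduct, mul_ite, ite_mul, mul_zero, zero_mul]
  have hzero : ∀ S : Finset (Fin n),
      (fun i => if i ∈ S then y i else 0) = 0 ↔ S ⊆ ({i | y i = 0} : Finset (Fin n)) := by
    intro S
    simp [funext_iff, subset_iff]
  have hnoise : noiseDist n s = fun w =>
      ∑ x ∈ powersetCard s (univ : Finset (Fin n)) ×ˢ (univ : Finset (Fin n → F)),
      1 / (n.choose s : ℝ) * (1 / (Fintype.card F : ℝ) ^ n) *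
        if (fun i => if i ∈ x.1 then x.2 i else 0) = w then 1 else 0 := by
    ext w
    rw [noiseDist, sum_product]
  rw [hnoise, fourier_sum_indicator, sum_product]
  simp_rw [hmask, mul_assoc, ← mul_sum, sum_addChar_dotProduct ψ hψ, hzero]
  have hcount : #{S ∈ powersetCard s univ | S ⊆ ({i | y i = 0} : Finset (Fin n))}
      = (#{i | y i = 0}).choose s := by
    rw [← card_powersetCard]
    congr 1
    ext S
    simp [mem_powersetCard, and_comm]
  rw [← sum_filter, sum_const, hcount, nsmul_eq_mul]
  field_simp

theorem abs_fourier_encDist_mul_fourier_noiseDist_le (hψ : ψ ≠ 1) {k : ℕ} (hkn : k ≤ n)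
    {a : Fin n → F} (ha : Function.Injective a) (s : ℕ) {y : Fin n → F} (hy : y ≠ 0) :
    |fourier ψ (encDist k n a) y * fourier ψ (noiseDist n s) y| ≤ (1 - k / n) ^ s := by
  rw [fourier_encDist ψ hψ, fourier_noiseDist ψ hψ]
  split_ifs with hdual
  · rw [one_mul, abs_of_nonneg (by positivity)]
    refine choose_div_choose_le_one_sub_div_pow ?_ s
    have hwt := lt_card_filter_ne_zero_of_vecMul_rsMatrix ha hy hdual
    have hsplit := card_filter_add_card_filter_not (s := (univ : Finset (Fin n))) (y · = 0)
    simp only [card_univ, Fintype.card_fin, ← ne_eq] at hsplit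
    omega
  · rw [zero_mul, abs_zero]
    exact pow_nonneg (one_sub_div_nonneg_of_le hkn) s

end Distributions

end MaskedCodeword

open MaskedCodeword

theorem masked_noisy_codeword_close_to_uniform_general
    (ℓ n k : ℕ) (hkn : k ≤ n) (s : ℕ) (hs : s ≤ n) (k' : ℝ)
    (F : Type*) [Field F] [Fintype F] [DecidableEq F] (hF : Fintype.card F = 2 ^ ℓ)
    (a : Fin n → F) (ha : Function.Injective a)
    (D : (Fin n → F) → ℝ) (hD0 : ∀ w, 0 ≤ D w) (hD1 : ∑ w, D w = 1)
    (hDent : k' ≤ minEntropy D) :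
    SD (fun w => ∑ c0 : Fin n → F, ∑ r0 : Fin n → F,
          encDist k n a c0 * noiseDist n s r0 * D (w - c0 - r0))
        (fun _ : Fin n → F => 1 / 2 ^ (n * ℓ)) ≤
      (2 : ℝ) ^ (((n * ℓ : ℝ) - k') / 2 - 1) * (1 - (k : ℝ) / n) ^ s := by
  have : CharP F 2 := charP_of_card_eq_prime_pow hF
  obtain ⟨ψ, hψ⟩ := exists_addChar_ne_one (F := F)
  have hP := fourier_conv₃ ψ (encDist k n a) (noiseDist n s) D
  have hP1 : ∑ w, ∑ c0, ∑ r0, encDist k n a c0 * noiseDist n s r0 * D (w - c0 - r0) = 1 := by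
    rw [← fourier_zero_right ψ, hP, fourier_encDist ψ hψ, fourier_noiseDist ψ hψ,
      fourier_zero_right, hD1]
    simp [(Nat.choose_pos hs).ne']
  have hSD := sq_two_mul_SD_uniform_le_of_abs_fourier_le ψ hψ hP1 (D := D)
      (β := (1 - (k : ℝ) / n) ^ s) fun y hy => by
    rw [hP, abs_mul]
    exact mul_le_mul_of_nonneg_right
      (abs_fourier_encDist_mul_fourier_noiseDist_le ψ hψ hkn ha s hy) (abs_nonneg _)
  have hq : (Fintype.card F : ℝ) ^ n = 2 ^ (n * ℓ) := by rw [hF]; push_cast; ring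
  rw [hq] at hSD
  have hcoll := sum_sq_le_rpow_neg_of_le_minEntropy hD0 hD1 hDent
  exact_mod_cast le_two_rpow_mul_of_sq_two_mul_le (pow_nonneg (one_sub_div_nonneg_of_le hkn) s)
    (hSD.trans (by gcongr))

/-- **Masked noisy codewords are close to uniform.**  For a uniform RS codeword `c`, the
random-subset noise `ρ` on `s` coordinates, and any independent distribution `D` with
`H_∞(D) ≥ k'`, the sum `c + ρ + D` is `2^((nℓ-k')/2-1)·(1-R)^s`-close to uniform on
`𝔽_{2^ℓ}ⁿ`, where `R = k/n`. -/
theorem masked_noisy_codeword_close_to_uniform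
    (ℓ n k : ℕ) (hkn : k ≤ n) (hn : n ≤ 2 ^ ℓ) (s : ℕ) (hs : s ≤ n) (k' : ℝ) (hk' : 0 ≤ k')
    (F : Type*) [Field F] [Fintype F] [DecidableEq F] (hF : Fintype.card F = 2 ^ ℓ)
    (a : Fin n → F) (ha : Function.Injective a)
    (D : (Fin n → F) → ℝ) (hD0 : ∀ w, 0 ≤ D w) (hD1 : ∑ w, D w = 1)
    (hDent : k' ≤ minEntropy D) :
    SD (fun w => ∑ c0 : Fin n → F, ∑ r0 : Fin n → F,
          encDist k n a c0 * noiseDist n s r0 * D (w - c0 - r0))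
        (fun _ : Fin n → F => 1 / 2 ^ (n * ℓ)) ≤
      (2 : ℝ) ^ (((n * ℓ : ℝ) - k') / 2 - 1) * (1 - (k : ℝ) / n) ^ s :=
  masked_noisy_codeword_close_to_uniform_general ℓ n k hkn s hs k' F hF a ha D hD0 hD1 hDent
end

section
/- (A small model cannot unmask a noisy codeword.) Let ℓ, n, k, m ∈ ℕ with k ≤ n ≤ 2^ℓ, R = k/n, 0 ≤ s ≤ n, and t > 0. Let Q be uniformly distributed on 𝔽_{2^ℓ}ⁿ and let Z be any random variable jointly distributed with Q whose support has size at most 2^m. Let c be a uniform codeword of the Reed–Solomon code over 𝔽_{2^ℓ} with dimension k and block length n, and let ρ be the random-subset noise on s coordinates, with c and ρ independent of each other and of (Q, Z). Then with probability at least 1 − 2^{−t} over z ← Z, the statistical distance between the conditional distribution of c + Q + ρ given Z = z and the uniform distribution on 𝔽_{2^ℓ}ⁿ is at most 2^{(m + t)/2 − 1}·(1 − R)^s. -/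
open Finset

/-- Marginal of the second component of a joint distribution. -/
noncomputable def margZ {A B : Type*} [Fintype A] (p : A × B → ℝ) : B → ℝ :=
  fun b => ∑ a, p (a, b)

/-!
Fix a nontrivial additive character `ψ : 𝔽 → ℝ` (it exists because `𝔽` has characteristic 2)
and the Fourier transform `f̂ y = ∑ x, f x ψ(x ⬝ y)` on `𝔽ⁿ`. Given `Z = z`, the law of
`c + Q + ρ` is the convolution of the codeword law, the noise law and the conditional law `D_z`
of `Q`, so its transform is the product of the three transforms. The codeword transform is the
indicator of the dual code, whose nonzero words have more than `k` nonzero entries (Vandermonde),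
and on a word `y` with `w` nonzero entries the noise transform is `C(n - w, s) / C(n, s)`, which
is at most `(1 - k/n)^s` there. Cauchy–Schwarz and Parseval then bound the distance to uniform by
`(1 - k/n)^s · (qⁿ ∑ D_z²)^(1/2) / 2`, and `D_z ≤ q⁻ⁿ / Pr[Z = z]` because `Q` is uniform.
Finally, the values `z` with `Pr[Z = z] < 2^-(m+t)` carry total mass below `2^-t`, since there
are at most `2^m` of them.
-/

theorem AddChar.map_sum_eq_prod {A M ι : Type*} [AddCommMonoid A] [CommMonoid M]
    (ψ : AddChar A M) (s : Finset ι) (f : ι → A) : ψ (∑ i ∈ s, f i) = ∏ i ∈ s, ψ (f i) := by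
  classical
  induction s using Finset.induction_on with
  | empty => simp
  | insert i s hi ih => rw [sum_insert hi, prod_insert hi, ψ.map_add_eq_mul, ih]

theorem AddChar.map_neg_eq_self_of_real {G : Type*} [AddCommGroup G] [Fintype G]
    (ψ : AddChar G ℝ) (a : G) : ψ (-a) = ψ a := by
  have hpow : ψ a ^ Fintype.card G = 1 := by
    rw [← ψ.map_nsmul_eq_pow, card_nsmul_eq_zero, ψ.map_zero_eq_one]
  have hsq : ψ a * ψ a = 1 := by
    rcases pow_eq_one_iff_cases.mp hpow with h | h | ⟨h, -⟩
    · exact absurd h Fintype.card_ne_zero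
    · simp [h]
    · simp [h]
  rw [ψ.map_neg_eq_inv, inv_eq_of_mul_eq_one_right hsq]

theorem AddChar.exists_isPrimitive_real (F : Type*) [Field F] [CharP F 2] :
    ∃ ψ : AddChar F ℝ, ψ.IsPrimitive := by
  let _ := ZMod.algebra F 2
  obtain ⟨φ, hφ⟩ : ∃ φ : Module.Dual (ZMod 2) F, φ 1 ≠ 0 := by
    by_contra! h
    exact one_ne_zero ((Module.forall_dual_apply_eq_zero_iff (ZMod 2) (1 : F)).mp h)
  have hφ1 : φ 1 = 1 := (by decide : ∀ u : ZMod 2, u ≠ 0 → u = 1) _ hφ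
  refine ⟨(zmodChar 2 (neg_one_sq : (-1 : ℝ) ^ 2 = 1)).compAddMonoidHom φ.toAddMonoidHom,
    IsPrimitive.of_ne_one ?_⟩
  rw [ne_one_iff]
  exact ⟨1, by norm_num [compAddMonoidHom, zmodChar_apply, hφ1, ZMod.val_one]⟩

theorem Nat.descFactorial_sub_mul_pow_le (n w : ℕ) :
    ∀ s, (n - w).descFactorial s * n ^ s ≤ n.descFactorial s * (n - w) ^ s
  | 0 => by simp
  | s + 1 => by
    have hstep : (n - w - s) * n ≤ (n - s) * (n - w) := by
      rcases le_or_gt (w + s) n with h | h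
      · have : s ≤ n - w := by omega
        zify [this, h, (by omega : w ≤ n), (by omega : s ≤ n)]
        nlinarith
      · simp [Nat.sub_eq_zero_of_le (by omega : n - w ≤ s)]
    calc (n - w).descFactorial (s + 1) * n ^ (s + 1)
        = ((n - w - s) * n) * ((n - w).descFactorial s * n ^ s) := by
          rw [Nat.descFactorial_succ, pow_succ]; ring
      _ ≤ ((n - s) * (n - w)) * (n.descFactorial s * (n - w) ^ s) :=
          Nat.mul_le_mul hstep (descFactorial_sub_mul_pow_le n w s)
      _ = n.descFactorial (s + 1) * (n - w) ^ (s + 1) := by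
          rw [Nat.descFactorial_succ, pow_succ]; ring

theorem Nat.choose_sub_mul_pow_le (n w s : ℕ) :
    (n - w).choose s * n ^ s ≤ n.choose s * (n - w) ^ s := by
  have h := descFactorial_sub_mul_pow_le n w s
  simp only [Nat.descFactorial_eq_factorial_mul_choose, mul_assoc] at h
  exact Nat.le_of_mul_le_mul_left h s.factorial_pos

theorem Nat.choose_sub_div_choose_le {n w : ℕ} (hw : w ≤ n) (s : ℕ) :
    ((n - w).choose s : ℝ) / n.choose s ≤ (1 - w / n) ^ s := by
  rcases Nat.eq_zero_or_pos n with rfl | hn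
  · obtain rfl : w = 0 := by omega
    simpa using div_self_le_one _
  have hfrac : 1 - (w : ℝ) / n = ((n - w : ℕ) : ℝ) / n := by
    rw [Nat.cast_sub hw]; field_simp
  rcases Nat.eq_zero_or_pos (n.choose s) with h | h
  · rw [h, Nat.cast_zero, div_zero, hfrac]; positivity
  rw [hfrac, div_pow, div_le_div_iff₀ (by exact_mod_cast h) (by positivity)]
  rw [mul_comm _ (n.choose s : ℝ)]
  exact_mod_cast choose_sub_mul_pow_le n w s

theorem Matrix.lt_card_support_of_sum_mul_pow_eq_zero {R ι : Type*} [CommRing R] [IsDomain R]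
    [DecidableEq R] [Fintype ι] {a : ι → R} (ha : Function.Injective a) {y : ι → R}
    (hy : y ≠ 0) {k : ℕ} (h : ∀ j : Fin k, ∑ i, y i * a i ^ (j : ℕ) = 0) : k < #{i | y i ≠ 0} := by
  set S := ({i | y i ≠ 0} : Finset ι)
  by_contra! hS
  let e := S.equivFin.symm
  have hvanish : (fun j => y (e j)) = 0 := by
    refine eq_zero_of_forall_pow_sum_mul_pow_eq_zero (f := fun j => a (e j))
      (ha.comp (Subtype.val_injective.comp e.injective)) fun j => ?_
    rw [e.sum_comp (fun i : S => y i * a i ^ (j : ℕ)), sum_coe_sort S fun i => y i * a i ^ (j : ℕ),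
      sum_filter_of_ne fun i _ hi => left_ne_zero_of_mul hi]
    exact h (Fin.castLE hS j)
  obtain ⟨i, hi⟩ := Function.ne_iff.mp hy
  have hiS : i ∈ S := by simpa [S] using hi
  exact hi (by simpa [e] using congrFun hvanish (e.symm ⟨i, hiS⟩))

namespace NoisyCodeword

section Fourier

variable {R ι : Type*} [CommRing R] [Fintype R] [Fintype ι] [DecidableEq ι]
  (ψ : AddChar R ℝ)

def fourier (f : (ι → R) → ℝ) (y : ι → R) : ℝ := ∑ x, f x * ψ (x ⬝ᵥ y)

def conv {G : Type*} [AddGroup G] [Fintype G] (f g : G → ℝ) (w : G) : ℝ := ∑ x, f x * g (w - x)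

theorem conv_conv_apply {G : Type*} [AddGroup G] [Fintype G] (f g h : G → ℝ) (w : G) :
    conv f (conv g h) w = ∑ x, ∑ y, f x * g y * h (w - x - y) := by
  simp only [conv, mul_sum, mul_assoc]

theorem fourier_conv (f g : (ι → R) → ℝ) (y : ι → R) :
    fourier ψ (conv f g) y = fourier ψ f y * fourier ψ g y := by
  rw [fourier, fourier, fourier, sum_mul_sum]
  simp only [conv, sum_mul]
  rw [sum_comm]
  refine sum_congr rfl fun x _ => ?_
  rw [← Equiv.sum_comp (Equiv.addRight x)]
  refine sum_congr rfl fun u _ => ?_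
  simp only [Equiv.coe_addRight, add_sub_cancel_right, add_dotProduct, ψ.map_add_eq_mul]
  ring

theorem fourier_zero (f : (ι → R) → ℝ) : fourier ψ f 0 = ∑ x, f x := by
  simp [fourier]

theorem fourier_sum {α : Type*} (t : Finset α) (f : α → (ι → R) → ℝ) (y : ι → R) :
    fourier ψ (fun w => ∑ a ∈ t, f a w) y = ∑ a ∈ t, fourier ψ (f a) y := by
  simp only [fourier, sum_mul]
  exact sum_comm

theorem fourier_sub (f g : (ι → R) → ℝ) (y : ι → R) :
    fourier ψ (fun w => f w - g w) y = fourier ψ f y - fourier ψ g y := by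
  simp only [fourier, sub_mul, sum_sub_distrib]

theorem fourier_dirac [DecidableEq R] (c : ℝ) (v y : ι → R) :
    fourier ψ (fun w => if v = w then c else 0) y = c * ψ (v ⬝ᵥ y) := by
  simp [fourier]

variable {ψ}

theorem sum_addChar_dotProduct [DecidableEq R] (hψ : ψ.IsPrimitive) (y : ι → R) :
    ∑ x : ι → R, ψ (x ⬝ᵥ y) = if y = 0 then (Fintype.card R : ℝ) ^ Fintype.card ι else 0 := by
  simp_rw [dotProduct, ψ.map_sum_eq_prod]
  rw [← Fintype.prod_sum (fun i (e : R) => ψ (e * y i))]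
  simp_rw [AddChar.sum_mulShift _ hψ]
  push_cast
  rw [Fintype.prod_ite_zero]
  simp [funext_iff]

theorem fourier_const [DecidableEq R] (hψ : ψ.IsPrimitive) (c : ℝ) (y : ι → R) :
    fourier ψ (fun _ => c) y = if y = 0 then c * (Fintype.card R : ℝ) ^ Fintype.card ι else 0 := by
  simp only [fourier, ← mul_sum, sum_addChar_dotProduct hψ y, mul_ite, mul_zero]

theorem sum_fourier_sq [DecidableEq R] (hψ : ψ.IsPrimitive) (f : (ι → R) → ℝ) :
    ∑ y, fourier ψ f y ^ 2 = (Fintype.card R : ℝ) ^ Fintype.card ι * ∑ x, f x ^ 2 := by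
  have hpair (x x' y : ι → R) : ψ (x ⬝ᵥ y) * ψ (x' ⬝ᵥ y) = ψ (y ⬝ᵥ (x - x')) := by
    rw [← ψ.map_neg_eq_self_of_real (x' ⬝ᵥ y), ← ψ.map_add_eq_mul, dotProduct_comm,
      dotProduct_sub, dotProduct_comm y x', sub_eq_add_neg]
  calc ∑ y, fourier ψ f y ^ 2
      = ∑ x, ∑ x', f x * f x' * ∑ y, ψ (y ⬝ᵥ (x - x')) := by
        simp only [fourier, sq, sum_mul_sum]
        simp only [mul_sum]
        rw [sum_comm]
        refine sum_congr rfl fun x _ => ?_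
        rw [sum_comm]
        refine sum_congr rfl fun x' _ => sum_congr rfl fun y _ => ?_
        rw [← hpair]
        ring
    _ = _ := by
        simp only [sum_addChar_dotProduct hψ, sub_eq_zero, mul_ite, mul_zero, sum_ite_eq,
          mem_univ, if_true, mul_sum]
        exact sum_congr rfl fun x _ => by ring

theorem SD_uniform_le [DecidableEq R] (hψ : ψ.IsPrimitive) (f : (ι → R) → ℝ)
    (hf : ∑ x, f x = 1) :
    SD f (fun _ => 1 / (Fintype.card R : ℝ) ^ Fintype.card ι) ≤
      √(∑ y ∈ univ.erase 0, fourier ψ f y ^ 2) / 2 := by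
  set V : ℝ := (Fintype.card R : ℝ) ^ Fintype.card ι
  have hV : 0 < V := by positivity
  have hdiff (y : ι → R) (hy : y ≠ 0) :
      fourier ψ (fun w => f w - 1 / V) y = fourier ψ f y := by
    rw [fourier_sub, fourier_const hψ, if_neg hy, sub_zero]
  have hdiff0 : fourier ψ (fun w => f w - 1 / V) 0 = 0 := by
    rw [fourier_sub, fourier_const hψ, if_pos rfl, fourier_zero, hf, one_div_mul_cancel hV.ne',
      sub_self]
  have hL2 : V * ∑ w, (f w - 1 / V) ^ 2 = ∑ y ∈ univ.erase 0, fourier ψ f y ^ 2 := by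
    rw [← sum_fourier_sq hψ, ← add_sum_erase _ _ (mem_univ 0), hdiff0, zero_pow two_ne_zero,
      zero_add]
    exact sum_congr rfl fun y hy => by rw [hdiff y (ne_of_mem_erase hy)]
  have hCS : (∑ w, |f w - 1 / V|) ^ 2 ≤ V * ∑ w, (f w - 1 / V) ^ 2 := by
    simpa [V, sq_abs] using sq_sum_le_card_mul_sum_sq (s := univ) (f := fun w => |f w - 1 / V|)
  rw [SD, div_le_div_iff_of_pos_right two_pos, Real.le_sqrt (by positivity) (by positivity)]
  exact hCS.trans hL2.le

end Fourier

theorem rsEnc_dotProduct {F : Type*} [Field F] {k n : ℕ} (a : Fin n → F) (m : Fin k → F)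
    (y : Fin n → F) :
    rsEnc k n a m ⬝ᵥ y = m ⬝ᵥ fun j => ∑ i, y i * a i ^ (j : ℕ) := by
  simp only [dotProduct, rsEnc, sum_mul, mul_sum]
  rw [sum_comm]
  exact sum_congr rfl fun j _ => sum_congr rfl fun i _ => by ring

section Codeword

variable {F : Type*} [Field F] [Fintype F] [DecidableEq F] {ψ : AddChar F ℝ}

theorem fourier_encDist (hψ : ψ.IsPrimitive) (k n : ℕ) (a : Fin n → F) (y : Fin n → F) :
    fourier ψ (encDist k n a) y =
      if (fun j : Fin k => ∑ i, y i * a i ^ (j : ℕ)) = 0 then 1 else 0 := by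
  have hq : (Fintype.card F : ℝ) ≠ 0 := by positivity
  unfold encDist
  simp only [mul_boole, fourier_sum, fourier_dirac, rsEnc_dotProduct, ← mul_sum]
  rw [sum_addChar_dotProduct hψ, Fintype.card_fin]
  split_ifs
  · field_simp
  · rw [mul_zero]

theorem fourier_noiseDist (hψ : ψ.IsPrimitive) (n s : ℕ) (y : Fin n → F) :
    fourier ψ (noiseDist n s) y = ((#{i | y i = 0}).choose s : ℝ) / n.choose s := by
  set Z : Finset (Fin n) := {i | y i = 0}
  have hq : (Fintype.card F : ℝ) ^ n ≠ 0 := by positivity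
  have hmask (S : Finset (Fin n)) (e : Fin n → F) :
      (fun i => if i ∈ S then e i else 0) ⬝ᵥ y = e ⬝ᵥ fun i => if i ∈ S then y i else 0 := by
    simp only [dotProduct, ite_mul, mul_ite, zero_mul, mul_zero]
  have hvanish (S : Finset (Fin n)) :
      (fun i => if i ∈ S then y i else 0) = 0 ↔ S ⊆ Z := by
    simp [Z, funext_iff, subset_iff]
  have hsubsets : {S ∈ powersetCard s (univ : Finset (Fin n)) | S ⊆ Z} = powersetCard s Z := by
    ext S
    simp only [mem_filter, mem_powersetCard, subset_univ, true_and, and_comm]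
  unfold noiseDist
  simp only [fourier_sum, fourier_dirac, hmask, ← mul_sum, sum_addChar_dotProduct hψ,
    Fintype.card_fin, hvanish, mul_ite, mul_zero]
  rw [← sum_filter, sum_const, hsubsets, card_powersetCard, nsmul_eq_mul]
  field_simp

theorem abs_fourier_encDist_mul_fourier_noiseDist_le (hψ : ψ.IsPrimitive) {k n : ℕ}
    (hkn : k ≤ n) {a : Fin n → F} (ha : Function.Injective a) (s : ℕ) {y : Fin n → F}
    (hy : y ≠ 0) :
    |fourier ψ (encDist k n a) y * fourier ψ (noiseDist n s) y| ≤ (1 - k / n) ^ s := by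
  have hrate : (0 : ℝ) ≤ 1 - k / n :=
    sub_nonneg.mpr (div_le_one_of_le₀ (by exact_mod_cast hkn) n.cast_nonneg)
  rw [fourier_encDist hψ, fourier_noiseDist hψ]
  split_ifs with hdual
  · have hk : k < #{i | y i ≠ 0} :=
      Matrix.lt_card_support_of_sum_mul_pow_eq_zero ha hy fun j => congrFun hdual j
    have hzeros : #{i | y i = 0} ≤ n - k := by
      have := card_filter_add_card_filter_not (s := (univ : Finset (Fin n))) (fun i => y i = 0)
      simp only [card_univ, Fintype.card_fin, ← ne_eq] at this
      omega
    rw [one_mul, abs_of_nonneg (by positivity)]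
    calc ((#{i | y i = 0}).choose s : ℝ) / n.choose s ≤ ((n - k).choose s : ℝ) / n.choose s := by
          gcongr
      _ ≤ (1 - k / n) ^ s := Nat.choose_sub_div_choose_le hkn s
  · rw [zero_mul, abs_zero]
    positivity

theorem SD_conv_encDist_noiseDist_le (hψ : ψ.IsPrimitive) {k n s : ℕ} (hkn : k ≤ n)
    (hs : s ≤ n) {a : Fin n → F} (ha : Function.Injective a) {D : (Fin n → F) → ℝ}
    (hD0 : ∀ q, 0 ≤ D q) (hD1 : ∑ q, D q = 1) {ε : ℝ} (hε : 0 < ε)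
    (hDmax : ∀ q, D q ≤ 1 / (Fintype.card F : ℝ) ^ n / ε) :
    SD (conv (encDist k n a) (conv (noiseDist n s) D)) (fun _ => 1 / (Fintype.card F : ℝ) ^ n)
      ≤ (1 - k / n) ^ s / (2 * √ε) := by
  set P := conv (encDist k n a) (conv (noiseDist n s) D)
  set V : ℝ := (Fintype.card F : ℝ) ^ n
  set B : ℝ := (1 - k / n) ^ s
  have hV : 0 < V := by positivity
  have hB : 0 ≤ B := pow_nonneg (sub_nonneg.mpr (div_le_one_of_le₀ (by exact_mod_cast hkn)
    n.cast_nonneg)) s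
  have hfP (y : Fin n → F) :
      fourier ψ P y = fourier ψ (encDist k n a) y * fourier ψ (noiseDist n s) y * fourier ψ D y :=
    by simp only [P, fourier_conv, mul_assoc]
  have hP1 : ∑ w, P w = 1 := by
    have : (n.choose s : ℝ) ≠ 0 := by exact_mod_cast (Nat.choose_pos hs).ne'
    rw [← fourier_zero, hfP, fourier_encDist hψ, fourier_noiseDist hψ, fourier_zero, hD1]
    simp [this, funext_iff]
  have hcollision : ∑ q, D q ^ 2 ≤ 1 / V / ε :=
    calc ∑ q, D q ^ 2 ≤ ∑ q, 1 / V / ε * D q :=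
          sum_le_sum fun q _ => by rw [sq]; exact mul_le_mul_of_nonneg_right (hDmax q) (hD0 q)
      _ = 1 / V / ε := by rw [← mul_sum, hD1, mul_one]
  have htail : ∑ y ∈ univ.erase 0, fourier ψ P y ^ 2 ≤ B ^ 2 / ε :=
    calc ∑ y ∈ univ.erase 0, fourier ψ P y ^ 2
        ≤ ∑ y ∈ univ.erase 0, B ^ 2 * fourier ψ D y ^ 2 := by
          refine sum_le_sum fun y hy => ?_
          rw [hfP, mul_pow, ← sq_abs (_ * _)]
          gcongr
          exact abs_fourier_encDist_mul_fourier_noiseDist_le hψ hkn ha s (ne_of_mem_erase hy)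
      _ ≤ B ^ 2 * ∑ y, fourier ψ D y ^ 2 := by
          rw [← mul_sum]
          exact mul_le_mul_of_nonneg_left (sum_le_sum_of_subset_of_nonneg (erase_subset _ _)
            fun y _ _ => sq_nonneg _) (sq_nonneg B)
      _ = B ^ 2 * (V * ∑ q, D q ^ 2) := by rw [sum_fourier_sq hψ, Fintype.card_fin]
      _ ≤ B ^ 2 * (V * (1 / V / ε)) := by gcongr
      _ = B ^ 2 / ε := by field_simp
  calc SD P (fun _ => 1 / V) ≤ √(∑ y ∈ univ.erase 0, fourier ψ P y ^ 2) / 2 := by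
        simpa [V] using SD_uniform_le hψ P hP1
    _ ≤ √(B ^ 2 / ε) / 2 := by gcongr
    _ = B / (2 * √ε) := by
        rw [Real.sqrt_div' _ hε.le, Real.sqrt_sq hB]
        ring

end Codeword

theorem one_sub_mul_le_sum_filter_ge {B : Type*} [Fintype B] {μ : B → ℝ}
    (hμ1 : ∑ b, μ b = 1) {N : ℕ} (hN : #{b | μ b ≠ 0} ≤ N) {ε : ℝ} (hε : 0 ≤ ε) :
    1 - N * ε ≤ ∑ b ∈ {b | ε ≤ μ b}, μ b := by
  have hlight : ∑ b ∈ {b | ¬ε ≤ μ b}, μ b ≤ N * ε :=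
    calc ∑ b ∈ {b | ¬ε ≤ μ b}, μ b = ∑ b ∈ {b | ¬ε ≤ μ b ∧ μ b ≠ 0}, μ b := by
          rw [← filter_filter, sum_filter_ne_zero]
      _ ≤ #{b | ¬ε ≤ μ b ∧ μ b ≠ 0} • ε :=
          sum_le_card_nsmul _ _ _ fun b hb => (not_le.mp (mem_filter.mp hb).2.1).le
      _ ≤ N * ε := by
          rw [nsmul_eq_mul]
          gcongr
          exact (card_le_card (monotone_filter_right _ fun b _ hb => hb.2)).trans hN
  linarith [sum_filter_add_sum_filter_not univ (fun b => ε ≤ μ b) μ]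

theorem div_margZ_le {A B : Type*} [Fintype A] [Fintype B] {p : A × B → ℝ} (hp0 : ∀ w, 0 ≤ p w)
    {c : ℝ} (hA : ∀ q, ∑ b, p (q, b) = c) (q : A) {z : B} {ε : ℝ} (hε : 0 < ε)
    (hz : ε ≤ margZ p z) : p (q, z) / margZ p z ≤ c / ε := by
  rw [← hA q]
  exact div_le_div₀ (sum_nonneg fun b _ => hp0 (q, b))
    (single_le_sum (fun b _ => hp0 (q, b)) (mem_univ z)) hε hz

end NoisyCodeword

open NoisyCodeword

theorem small_model_cannot_unmask_general
    (ℓ n k m : ℕ) (hkn : k ≤ n) (s : ℕ) (hs : s ≤ n) (t : ℝ)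
    (F : Type*) [Field F] [Fintype F] [DecidableEq F] (hF : Fintype.card F = 2 ^ ℓ)
    (a : Fin n → F) (ha : Function.Injective a)
    (B : Type*) [Fintype B]
    (p : (Fin n → F) × B → ℝ)
    (hp0 : ∀ w, 0 ≤ p w) (hp1 : ∑ w, p w = 1)
    (hQunif : ∀ q : Fin n → F, ∑ b, p (q, b) = 1 / 2 ^ (n * ℓ))
    (hsupp : ((Finset.univ : Finset B).filter (fun b => margZ p b ≠ 0)).card ≤ 2 ^ m) :
    1 - (2 : ℝ) ^ (-t) ≤
      ∑ z ∈ (Finset.univ : Finset B).filter (fun z =>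
          SD (fun w : Fin n → F => ∑ c0 : Fin n → F, ∑ r0 : Fin n → F,
                encDist k n a c0 * noiseDist n s r0 * (p (w - c0 - r0, z) / margZ p z))
              (fun _ : Fin n → F => 1 / 2 ^ (n * ℓ)) ≤
            (2 : ℝ) ^ (((m : ℝ) + t) / 2 - 1) * (1 - (k : ℝ) / n) ^ s),
        margZ p z := by
  have : CharP F 2 := charP_of_card_eq_prime_pow hF
  obtain ⟨ψ, hψ⟩ := AddChar.exists_isPrimitive_real F
  have hV : (Fintype.card F : ℝ) ^ n = 2 ^ (n * ℓ) := by rw [hF]; push_cast; ring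
  set ε : ℝ := 2 ^ (-((m : ℝ) + t))
  have hε : 0 < ε := by positivity
  have hscale : 1 / (2 * √ε) = (2 : ℝ) ^ (((m : ℝ) + t) / 2 - 1) := by
    rw [Real.sqrt_eq_rpow, ← Real.rpow_mul zero_le_two, Real.rpow_sub_one two_ne_zero,
      neg_mul, Real.rpow_neg zero_le_two]
    field_simp
  have hmarg1 : ∑ z, margZ p z = 1 := by rw [← hp1, Fintype.sum_prod_type_right]; rfl
  calc 1 - (2 : ℝ) ^ (-t) = 1 - ((2 ^ m : ℕ) : ℝ) * ε := by
        rw [Nat.cast_pow, Nat.cast_ofNat, ← Real.rpow_natCast, ← Real.rpow_add two_pos]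
        ring_nf
    _ ≤ ∑ z ∈ {z | ε ≤ margZ p z}, margZ p z := one_sub_mul_le_sum_filter_ge hmarg1 hsupp hε.le
    _ ≤ _ := by
        refine sum_le_sum_of_subset_of_nonneg (monotone_filter_right _ fun z _ hz => ?_)
          fun z _ _ => sum_nonneg fun q _ => hp0 (q, z)
        have hz0 : 0 < margZ p z := hε.trans_le hz
        have hSD := SD_conv_encDist_noiseDist_le hψ hkn hs ha (D := fun q => p (q, z) / margZ p z)
          (fun q => div_nonneg (hp0 _) hz0.le) (by rw [← sum_div]; exact div_self hz0.ne') hε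
          (fun q => by rw [hV]; exact div_margZ_le hp0 hQunif q hε hz)
        simp only [funext (conv_conv_apply _ _ _), hV] at hSD
        refine hSD.trans_eq ?_
        rw [div_eq_mul_one_div, hscale, mul_comm]

/-- **A small model cannot unmask a noisy codeword.**  Let `Q` be uniform on `𝔽_{2^ℓ}ⁿ`,
`Z` jointly distributed with `Q` with support of size at most `2^m`, and let `c` be a
uniform RS codeword and `ρ` the random-subset noise on `s` coordinates, independent of
`(Q, Z)`.  Then with probability at least `1 - 2^(-t)` over `z ← Z`, the conditional
distribution of `c + Q + ρ` given `Z = z` is `2^((m+t)/2-1)·(1-R)^s`-close to uniform. -/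
theorem small_model_cannot_unmask
    (ℓ n k m : ℕ) (hkn : k ≤ n) (hn : n ≤ 2 ^ ℓ) (s : ℕ) (hs : s ≤ n) (t : ℝ) (ht : 0 < t)
    (F : Type*) [Field F] [Fintype F] [DecidableEq F] (hF : Fintype.card F = 2 ^ ℓ)
    (a : Fin n → F) (ha : Function.Injective a)
    (B : Type*) [Fintype B]
    (p : (Fin n → F) × B → ℝ)
    (hp0 : ∀ w, 0 ≤ p w) (hp1 : ∑ w, p w = 1)
    (hQunif : ∀ q : Fin n → F, ∑ b, p (q, b) = 1 / 2 ^ (n * ℓ))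
    (hsupp : ((Finset.univ : Finset B).filter (fun b => margZ p b ≠ 0)).card ≤ 2 ^ m) :
    1 - (2 : ℝ) ^ (-t) ≤
      ∑ z ∈ (Finset.univ : Finset B).filter (fun z =>
          SD (fun w : Fin n → F => ∑ c0 : Fin n → F, ∑ r0 : Fin n → F,
                encDist k n a c0 * noiseDist n s r0 * (p (w - c0 - r0, z) / margZ p z))
              (fun _ : Fin n → F => 1 / 2 ^ (n * ℓ)) ≤
            (2 : ℝ) ^ (((m : ℝ) + t) / 2 - 1) * (1 - (k : ℝ) / n) ^ s),
        margZ p z :=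
  small_model_cannot_unmask_general ℓ n k m hkn s hs t F hF a ha B p hp0 hp1 hQunif hsupp
end

section
/- (Key step of the robust lower bound: the perturbed instance hides the message from a small model.) Let β, k, ℓ, n, r₂, p ∈ ℕ with k ≤ n ≤ 2^ℓ, R = k/n, 0 ≤ s ≤ n, t > 0, η ≥ 0 and k″ ≥ 0. Let Enc: 𝔽_{2^ℓ}^k → 𝔽_{2^ℓ}ⁿ be the Reed–Solomon encoding with dimension k and block length n. Let samp₂: {0,1}^{r₂} → (size-nℓ subsets of {1,…,β}) be a function such that for every distribution X on {0,1}^β with H_∞(X) ≥ β − p − t there exists a distribution Y on {0,1}^{nℓ} with H_∞(Y) ≥ k″ and SD((u₂, X|_{samp₂(u₂)}), (u₂, Y)) ≤ η, where u₂ is uniform on {0,1}^{r₂}. Let Q be uniformly distributed on {0,1}^β and let Z be any random variable jointly distributed with Q whose support has size at most 2^p. Let m be uniform on 𝔽_{2^ℓ}^k and let ρ be the random-subset noise on s coordinates, with u₂, m and ρ mutually independent and independent of (Q, Z). Then with probability at least 1 − 2^{−t} over z ← Z, the statistical distance between the conditional distribution of (u₂, Enc(m) + Q|_{samp₂(u₂)}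 + ρ) given Z = z (with Q|_{samp₂(u₂)} read as a vector in 𝔽_{2^ℓ}ⁿ and additions coordinatewise in 𝔽_{2^ℓ}) and the distribution (u₂, uniform on 𝔽_{2^ℓ}ⁿ) is at most η + 2^{(nℓ − k″)/2 − 1}·(1 − R)^s. -/
open Finset

/-- Restriction `x|_S` of a string `x ∈ {0,1}^N` to a subset `S` of size `t`, listing the
coordinates of `S` in increasing order. -/
def restrict {N t : ℕ} (x : Fin N → ZMod 2) (S : Finset (Fin N)) (h : S.card = t) :
    Fin t → ZMod 2 :=
  fun j => x ((S.orderIsoOfFin h j : Fin N))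

/-- Reading an `n·ℓ`-bit string as a vector in `𝔽_{2^ℓ}ⁿ`, via a fixed identification
`toF` of `{0,1}^ℓ` with the field. -/
def vecOf {F : Type*} (ℓ n : ℕ) (toF : (Fin ℓ → ZMod 2) ≃ F)
    (y : Fin (n * ℓ) → ZMod 2) : Fin n → F :=
  fun i => toF (fun b => y (finProdFinEquiv (i, b)))

/-!
Outside an event of probability `2^(-t)`, the observed value `z` of the model has mass at least
`2^(-pm-t)`, so conditioned on it the key keeps min-entropy `β - pm - t`, and the sampler replaces
the sampled part of the key by a source `Y` of min-entropy `k''` at cost `η`.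

For such a `Y`, the law of `Enc(m) + Y + ρ` is a convolution, so its Fourier coefficient at `α`
is the product of those of `Y`, of a uniform codeword (the indicator of the dual code) and of the
noise (the probability that the noise avoids the support of `α`). A nonzero dual codeword has
more than `k` nonzero coordinates, so off `α = 0` the product of the last two is at most
`(1 - R)^s`. Parseval and Cauchy–Schwarz then bound the distance to uniform by
`(1 - R)^s · √(2^(nℓ) ∑ Y²) / 2 ≤ 2^((nℓ - k'')/2 - 1) (1 - R)^s`. The characters are real:
`v ↦ ψ (α ⬝ᵥ v)` for a nontrivial `ψ : F → {±1}`, which exists because `F` has characteristic 2.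
-/

section StatisticalDistance

variable {Ω : Type*} [Fintype Ω]

lemma SD_triangle (f g h : Ω → ℝ) : SD f h ≤ SD f g + SD g h := by
  rw [SD, SD, SD, ← add_div, ← sum_add_distrib]
  gcongr with ω
  exact abs_sub_le _ _ _

lemma SD_comp_kernel_le {U V W : Type*} [Fintype U] [Fintype V] [Fintype W]
    (f g : U × V → ℝ) (K : V → W → ℝ) (hK0 : ∀ v w, 0 ≤ K v w) (hK1 : ∀ v, ∑ w, K v w = 1) :
    SD (fun uw : U × W => ∑ v, f (uw.1, v) * K v uw.2)
      (fun uw : U × W => ∑ v, g (uw.1, v) * K v uw.2) ≤ SD f g := by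
  unfold SD
  gcongr
  calc ∑ uw : U × W, |∑ v, f (uw.1, v) * K v uw.2 - ∑ v, g (uw.1, v) * K v uw.2|
      ≤ ∑ uw : U × W, ∑ v, |f (uw.1, v) - g (uw.1, v)| * K v uw.2 := by
        gcongr with uw
        rw [← sum_sub_distrib]
        refine (abs_sum_le_sum_abs _ _).trans_eq (sum_congr rfl fun v _ => ?_)
        rw [← sub_mul, abs_mul, abs_of_nonneg (hK0 _ _)]
    _ = ∑ uv : U × V, |f uv - g uv| := by
        simp only [Fintype.sum_prod_type]
        refine sum_congr rfl fun u _ => ?_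
        rw [sum_comm]
        simp only [← mul_sum, hK1, mul_one]

lemma SD_const_mul_snd {U V : Type*} [Fintype U] [Fintype V] (c : ℝ) (hc : 0 ≤ c)
    (f g : V → ℝ) :
    SD (fun uv : U × V => c * f uv.2) (fun uv => c * g uv.2) = Fintype.card U * c * SD f g := by
  simp only [SD, ← mul_sub, abs_mul, abs_of_nonneg hc, Fintype.sum_prod_type, ← mul_sum,
    sum_const, card_univ, nsmul_eq_mul]
  ring

lemma SD_le_sqrt (f g : Ω → ℝ) :
    SD f g ≤ √(Fintype.card Ω * ∑ ω, (f ω - g ω) ^ 2) / 2 := by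
  rw [SD]
  gcongr
  refine Real.le_sqrt_of_sq_le ?_
  simpa only [sq_abs, card_univ] using
    sq_sum_le_card_mul_sum_sq (s := univ) (f := fun ω => |f ω - g ω|)

end StatisticalDistance

section MinEntropy

variable {Ω : Type*} [Fintype Ω] {P : Ω → ℝ} {c : ℝ}

lemma iSup_pos_of_sum_eq_one (hP : ∑ ω, P ω = 1) : 0 < ⨆ ω, P ω := by
  obtain ⟨ω, -, hω⟩ := exists_lt_of_sum_lt (s := univ) (f := 0) (g := P) (by simp [hP])
  exact hω.trans_le (le_ciSup (Set.finite_range P).bddAbove ω)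

lemma le_minEntropy_iff (hP : ∑ ω, P ω = 1) : c ≤ minEntropy P ↔ ∀ ω, P ω ≤ 2 ^ (-c) := by
  have : Nonempty Ω := by
    by_contra h
    simp [not_nonempty_iff.mp h] at hP
  rw [minEntropy, le_neg, ← ciSup_le_iff (Set.finite_range P).bddAbove,
    Real.logb_le_iff_le_rpow one_lt_two (iSup_pos_of_sum_eq_one hP)]

lemma sum_sq_le_of_le_minEntropy (hP0 : ∀ ω, 0 ≤ P ω) (hP1 : ∑ ω, P ω = 1)
    (h : c ≤ minEntropy P) : ∑ ω, P ω ^ 2 ≤ 2 ^ (-c) :=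
  calc ∑ ω, P ω ^ 2 ≤ ∑ ω, 2 ^ (-c) * P ω := by
        gcongr with ω
        rw [sq]
        exact mul_le_mul_of_nonneg_right ((le_minEntropy_iff hP1).mp h ω) (hP0 ω)
    _ = 2 ^ (-c) := by rw [← mul_sum, hP1, mul_one]

end MinEntropy

section Conditioning

variable {A B : Type*} [Fintype A] {p : A × B → ℝ}

lemma margZ_nonneg (hp0 : ∀ w, 0 ≤ p w) (b : B) : 0 ≤ margZ p b :=
  sum_nonneg fun a _ => hp0 (a, b)

lemma sum_margZ [Fintype B] : ∑ b, margZ p b = ∑ w, p w := by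
  rw [Fintype.sum_prod_type, sum_comm]
  rfl

lemma sum_div_margZ {b : B} (hb : margZ p b ≠ 0) : ∑ a, p (a, b) / margZ p b = 1 := by
  rw [← sum_div]
  exact div_self hb

lemma div_margZ_le [Fintype B] (hp0 : ∀ w, 0 ≤ p w) {c : ℝ} (hc : ∀ a, ∑ b, p (a, b) = c) {τ : ℝ}
    (hτ : 0 < τ) {b : B} (hb : τ ≤ margZ p b) (a : A) : p (a, b) / margZ p b ≤ c / τ := by
  have hab : p (a, b) ≤ c := hc a ▸ single_le_sum (fun b _ => hp0 (a, b)) (mem_univ b)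
  exact div_le_div₀ ((hp0 _).trans hab) hab hτ hb

lemma one_sub_mul_le_sum_filter_le [Fintype B] {μ : B → ℝ} (hμ1 : ∑ b, μ b = 1)
    {K : ℕ} (hK : #{b | μ b ≠ 0} ≤ K) {τ : ℝ} (hτ : 0 ≤ τ) :
    1 - K * τ ≤ ∑ b with τ ≤ μ b, μ b := by
  have hlight : ∑ b with ¬τ ≤ μ b, μ b ≤ K * τ :=
    calc ∑ b with ¬τ ≤ μ b, μ b = ∑ b with ¬τ ≤ μ b ∧ μ b ≠ 0, μ b := by
          rw [← filter_filter, sum_filter_ne_zero]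
      _ ≤ #{b | ¬τ ≤ μ b ∧ μ b ≠ 0} * τ := by
          rw [← nsmul_eq_mul]
          exact sum_le_card_nsmul _ _ _ fun b hb => (not_le.mp (mem_filter.mp hb).2.1).le
      _ ≤ K * τ := by
          gcongr
          exact_mod_cast (card_le_card (monotone_filter_right _ fun _ _ h => And.right h)).trans hK
  linarith [sum_filter_add_sum_filter_not univ (fun b => τ ≤ μ b) μ]

end Conditioning

section Fourier

open Matrix

variable {F ι : Type*} [Field F] [Fintype F] [DecidableEq F] [Fintype ι] [DecidableEq ι]
  (ψ : AddChar F ℝ)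

lemma sum_addChar_dotProduct (hψ : ψ ≠ 1) (α : ι → F) :
    ∑ v, ψ (α ⬝ᵥ v) = if α = 0 then (Fintype.card F : ℝ) ^ Fintype.card ι else 0 := by
  split_ifs with hα
  · simp [hα]
  obtain ⟨i, hi⟩ := Function.ne_iff.mp hα
  obtain ⟨x, hx⟩ := AddChar.ne_one_iff.mp hψ
  refine AddChar.sum_eq_zero_of_ne_one
    (ψ := ψ.compAddMonoidHom (AddMonoidHom.mk' (α ⬝ᵥ ·) (dotProduct_add α)))
    (AddChar.ne_one_iff.mpr ⟨Pi.single i (x / α i), ?_⟩)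
  simpa [dotProduct_single, mul_div_cancel₀ _ hi] using hx

noncomputable def dotDFT (f : (ι → F) → ℝ) (α : ι → F) : ℝ :=
  ∑ v, f v * ψ (α ⬝ᵥ v)

theorem sum_dotDFT_sq [CharP F 2] (hψ : ψ ≠ 1) (f : (ι → F) → ℝ) :
    ∑ α, dotDFT ψ f α ^ 2 = (Fintype.card F : ℝ) ^ Fintype.card ι * ∑ v, f v ^ 2 := by
  have horth : ∀ v w : ι → F, ∑ α, ψ (α ⬝ᵥ v) * ψ (α ⬝ᵥ w) =
      if v = w then (Fintype.card F : ℝ) ^ Fintype.card ι else 0 := by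
    intro v w
    -- in characteristic 2, `ψ x * ψ y = ψ (x - y)`
    simp_rw [← AddChar.map_add_eq_mul, ← CharTwo.sub_eq_add, ← dotProduct_sub,
      dotProduct_comm _ (v - w)]
    simp only [sum_addChar_dotProduct ψ hψ, sub_eq_zero]
  calc ∑ α, dotDFT ψ f α ^ 2
      = ∑ v, ∑ w, f v * f w * ∑ α, ψ (α ⬝ᵥ v) * ψ (α ⬝ᵥ w) := by
        simp only [dotDFT, sq, sum_mul_sum]
        simp only [mul_sum]
        rw [sum_comm]
        refine sum_congr rfl fun v _ => ?_
        rw [sum_comm]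
        exact sum_congr rfl fun w _ => sum_congr rfl fun α _ => by ring
    _ = (Fintype.card F : ℝ) ^ Fintype.card ι * ∑ v, f v ^ 2 := by
        simp only [horth, mul_ite, mul_zero, sum_ite_eq, mem_univ, if_true, mul_sum]
        exact sum_congr rfl fun v _ => by ring

/-- Vazirani's XOR lemma, in its `ℓ²` form. -/
theorem SD_uniform_le_sqrt_sum_dotDFT_sq [CharP F 2] (hψ : ψ ≠ 1) (D : (ι → F) → ℝ)
    (hD : ∑ v, D v = 1) :
    SD D (fun _ => 1 / (Fintype.card F : ℝ) ^ Fintype.card ι) ≤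
      √(∑ α ∈ univ.erase 0, dotDFT ψ D α ^ 2) / 2 := by
  set N : ℝ := (Fintype.card F : ℝ) ^ Fintype.card ι
  have hDFT : ∀ α, dotDFT ψ (fun v => D v - 1 / N) α = if α = 0 then 0 else dotDFT ψ D α := by
    intro α
    simp only [dotDFT, sub_mul, sum_sub_distrib, ← mul_sum, sum_addChar_dotProduct ψ hψ]
    split_ifs with hα
    · simp [hα, hD, N]
    · simp
  calc SD D (fun _ => 1 / N)
      ≤ √(Fintype.card (ι → F) * ∑ v, (D v - 1 / N) ^ 2) / 2 := SD_le_sqrt _ _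
    _ = √(∑ α, dotDFT ψ (fun v => D v - 1 / N) α ^ 2) / 2 := by
        rw [sum_dotDFT_sq ψ hψ, Fintype.card_fun]
        push_cast
        rfl
    _ = √(∑ α ∈ univ.erase 0, dotDFT ψ D α ^ 2) / 2 := by
        rw [← add_sum_erase _ _ (mem_univ 0)]
        simp only [hDFT, if_pos, zero_pow two_ne_zero, zero_add]
        congr 2
        exact sum_congr rfl fun α hα => by rw [if_neg (ne_of_mem_erase hα)]

end Fourier

lemma exists_addChar_ne_one (F : Type*) [Field F] [CharP F 2] : ∃ ψ : AddChar F ℝ, ψ ≠ 1 := by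
  let := ZMod.algebra F 2
  obtain ⟨φ, hφ⟩ := Module.Projective.exists_dual_eq_one (ZMod 2) (one_ne_zero' F)
  refine ⟨(AddChar.zmodChar 2 (neg_one_sq (R := ℝ))).compAddMonoidHom φ.toAddMonoidHom,
    AddChar.ne_one_iff.mpr ⟨1, ?_⟩⟩
  norm_num [AddChar.zmodChar_apply, hφ, ZMod.val_one]

theorem Nat.choose_mul_pow_le_choose_mul_pow {m n : ℕ} (h : m ≤ n) (s : ℕ) :
    m.choose s * n ^ s ≤ n.choose s * m ^ s := by
  have hdesc : m.descFactorial s * n ^ s ≤ n.descFactorial s * m ^ s := by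
    induction s with
    | zero => simp
    | succ s ih =>
      have hstep : (m - s) * n ≤ (n - s) * m := by
        rw [Nat.sub_mul, Nat.sub_mul, mul_comm n m]
        exact Nat.sub_le_sub_left (Nat.mul_le_mul_left s h) _
      calc m.descFactorial (s + 1) * n ^ (s + 1)
          = m.descFactorial s * n ^ s * ((m - s) * n) := by rw [descFactorial_succ, pow_succ]; ring
        _ ≤ n.descFactorial s * m ^ s * ((n - s) * m) := Nat.mul_le_mul ih hstep
        _ = n.descFactorial (s + 1) * m ^ (s + 1) := by rw [descFactorial_succ, pow_succ]; ring
  rw [descFactorial_eq_factorial_mul_choose, descFactorial_eq_factorial_mul_choose, mul_assoc,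
    mul_assoc] at hdesc
  exact Nat.le_of_mul_le_mul_left hdesc (factorial_pos s)

lemma choose_div_choose_le_pow {m n : ℕ} (h : m ≤ n) (hn : 0 < n) (s : ℕ) :
    (m.choose s : ℝ) / n.choose s ≤ ((m : ℝ) / n) ^ s := by
  rcases (n.choose s).eq_zero_or_pos with h0 | hpos
  · rw [h0, Nat.cast_zero, div_zero]
    positivity
  rw [div_pow, div_le_div_iff₀ (by exact_mod_cast hpos) (by positivity), mul_comm ((m : ℝ) ^ s)]
  exact_mod_cast Nat.choose_mul_pow_le_choose_mul_pow h s

lemma one_sub_div_pow_nonneg {k n : ℕ} (hkn : k ≤ n) (s : ℕ) : 0 ≤ (1 - (k : ℝ) / n) ^ s :=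
  pow_nonneg (sub_nonneg.mpr (div_le_one_of_le₀ (by exact_mod_cast hkn) (Nat.cast_nonneg n))) s

section ReedSolomon

open Matrix Polynomial

variable {F : Type*} [Field F]

lemma rsEnc_eq_mulVec (k n : ℕ) (a : Fin n → F) (m : Fin k → F) :
    rsEnc k n a m = rectVandermonde a 1 k *ᵥ m := by
  ext i
  simp [rsEnc, mulVec, dotProduct, rectVandermonde_apply, mul_comm]

/-- The dual distance of Reed–Solomon codes: were the support of `α` of size at most `k`, the
Lagrange basis polynomial at one of its points would have degree `< k` and pair nontrivially
with `α`. -/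
theorem lt_card_ne_zero_of_vecMul_rectVandermonde_eq_zero [DecidableEq F] {ι : Type*}
    [Fintype ι] [DecidableEq ι] {a : ι → F} (ha : Function.Injective a) {k : ℕ} {α : ι → F}
    (hα : α ≠ 0) (hdual : α ᵥ* rectVandermonde a 1 k = 0) : k < #{i | α i ≠ 0} := by
  obtain ⟨i₀, hi₀⟩ := Function.ne_iff.mp hα
  set T : Finset ι := {i | α i ≠ 0}
  have hi₀T : i₀ ∈ T := by simpa [T] using hi₀
  by_contra! hTk
  set P := Lagrange.basis T a i₀
  have hP : P.natDegree < k := by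
    rw [Lagrange.natDegree_basis ha.injOn hi₀T]
    have := card_pos.mpr ⟨i₀, hi₀T⟩
    omega
  have horth : ∑ i, α i * P.eval (a i) = 0 := by
    simp only [eval_eq_sum_range' hP, mul_sum]
    rw [sum_comm]
    refine sum_eq_zero fun j hj => ?_
    have := congrFun hdual ⟨j, mem_range.mp hj⟩
    simp only [vecMul, dotProduct, rectVandermonde_apply, Pi.one_apply, one_pow, mul_one,
      Pi.zero_apply] at this
    simp_rw [mul_left_comm (α _) (P.coeff j), ← mul_sum, this, mul_zero]
  have hsingle : ∑ i, α i * P.eval (a i) = α i₀ := by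
    rw [sum_eq_single i₀ _ (by simp), Lagrange.eval_basis_self ha.injOn hi₀T, mul_one]
    intro i _ hi
    by_cases hiT : i ∈ T
    · rw [Lagrange.eval_basis_of_ne (Ne.symm hi) hiT, mul_zero]
    · rw [show α i = 0 by simpa [T] using hiT, zero_mul]
  exact hi₀ (hsingle ▸ horth)

end ReedSolomon

section NoisyCodeword

variable {F : Type*} [Field F] [Fintype F] [DecidableEq F]

/-- The law of `Enc(m) + x + ρ` for a uniform message `m` and random-subset noise `ρ` on `s`
coordinates. -/
noncomputable def noisyCodewordLaw (k s : ℕ) {n : ℕ} (a : Fin n → F) (x w : Fin n → F) : ℝ :=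
  ∑ m : Fin k → F,
    ∑ S ∈ powersetCard s (univ : Finset (Fin n)),
      ∑ e : Fin n → F,
        (1 / (Fintype.card F : ℝ) ^ k) * (1 / (n.choose s : ℝ)) *
          (1 / (Fintype.card F : ℝ) ^ n) *
          (if (fun i => rsEnc k n a m i + x i + (if i ∈ S then e i else 0)) = w then 1 else 0)

variable {k s n : ℕ} {a : Fin n → F}

lemma noisyCodewordLaw_nonneg (x w : Fin n → F) : 0 ≤ noisyCodewordLaw k s a x w := by
  unfold noisyCodewordLaw
  positivity

lemma sum_noisyCodewordLaw_mul (x : Fin n → F) (g : (Fin n → F) → ℝ) :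
    ∑ w, noisyCodewordLaw k s a x w * g w =
      (1 / (Fintype.card F : ℝ) ^ k) * (1 / (n.choose s : ℝ)) * (1 / (Fintype.card F : ℝ) ^ n) *
        ∑ m : Fin k → F, ∑ S ∈ powersetCard s univ, ∑ e : Fin n → F,
          g (rsEnc k n a m + x + fun i => if i ∈ S then e i else 0) := by
  simp only [noisyCodewordLaw, sum_mul, mul_sum]
  rw [sum_comm]
  refine sum_congr rfl fun m _ => ?_
  rw [sum_comm]
  refine sum_congr rfl fun S _ => ?_
  rw [sum_comm]
  refine sum_congr rfl fun e _ => ?_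
  simp only [mul_ite, mul_one, mul_zero, ite_mul, zero_mul, sum_ite_eq, mem_univ, if_true]
  rfl

lemma sum_noisyCodewordLaw (hs : s ≤ n) (x : Fin n → F) : ∑ w, noisyCodewordLaw k s a x w = 1 := by
  have := sum_noisyCodewordLaw_mul (k := k) (s := s) (a := a) x 1
  simp only [Pi.one_apply, mul_one, sum_const, card_univ, card_powersetCard, Fintype.card_fun,
    Fintype.card_fin, nsmul_eq_mul, Nat.cast_pow] at this
  rw [this]
  have : (n.choose s : ℝ) ≠ 0 := by exact_mod_cast (Nat.choose_pos hs).ne'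
  field_simp

end NoisyCodeword

section NoisyCodewordBias

open Matrix

variable {F : Type*} [Field F] [DecidableEq F] {k s n : ℕ}

/-- The Fourier coefficient of `noisyCodewordLaw` at `α`, up to the phase `ψ (α ⬝ᵥ x)`: the
message averages it to `0` unless `α` is orthogonal to the code, and the noise averages it to
the probability that the support of the noise avoids that of `α`. -/
noncomputable def noisyCodewordBias (k s : ℕ) (a α : Fin n → F) : ℝ :=
  if α ᵥ* rectVandermonde a 1 k = 0 then ((#{i | α i = 0}).choose s : ℝ) / n.choose s else 0

lemma abs_noisyCodewordBias_le (hkn : k ≤ n) {a : Fin n → F} (ha : Function.Injective a)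
    {α : Fin n → F} (hα : α ≠ 0) : |noisyCodewordBias k s a α| ≤ (1 - (k : ℝ) / n) ^ s := by
  unfold noisyCodewordBias
  split_ifs with hdual
  · have hweight := lt_card_ne_zero_of_vecMul_rectVandermonde_eq_zero ha hα hdual
    have hsplit := card_filter_add_card_filter_not (s := (univ : Finset (Fin n)))
      (fun i => α i = 0)
    simp only [card_univ, Fintype.card_fin, ← ne_eq] at hsplit
    have hn : 0 < n := by omega
    rw [abs_of_nonneg (by positivity)]
    refine (choose_div_choose_le_pow (by omega) hn s).trans (pow_le_pow_left₀ (by positivity) ?_ s)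
    rw [le_sub_iff_add_le, ← add_div, div_le_one (by exact_mod_cast hn)]
    exact_mod_cast (by omega : #{i | α i = 0} + k ≤ n)
  · simpa using one_sub_div_pow_nonneg hkn s

end NoisyCodewordBias

section NoisyCodewordFourier

open Matrix

variable {F : Type*} [Field F] [Fintype F] [DecidableEq F] (ψ : AddChar F ℝ)

lemma sum_addChar_dotProduct_rsEnc (hψ : ψ ≠ 1) (k : ℕ) {n : ℕ} (a : Fin n → F)
    (α : Fin n → F) :
    ∑ m : Fin k → F, ψ (α ⬝ᵥ rsEnc k n a m) =
      if α ᵥ* rectVandermonde a 1 k = 0 then (Fintype.card F : ℝ) ^ k else 0 := by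
  simp_rw [rsEnc_eq_mulVec, dotProduct_mulVec]
  rw [sum_addChar_dotProduct ψ hψ, Fintype.card_fin]

lemma sum_addChar_dotProduct_noise (hψ : ψ ≠ 1) {ι : Type*} [Fintype ι] [DecidableEq ι]
    (s : ℕ) (α : ι → F) :
    ∑ S ∈ powersetCard s univ, ∑ e : ι → F, ψ (α ⬝ᵥ fun i => if i ∈ S then e i else 0) =
      (#{i | α i = 0}).choose s * (Fintype.card F : ℝ) ^ Fintype.card ι := by
  have hmask : ∀ (S : Finset ι) (e : ι → F),
      (α ⬝ᵥ fun i => if i ∈ S then e i else 0) = (fun i => if i ∈ S then α i else 0) ⬝ᵥ e := by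
    intro S e
    simp only [dotProduct, mul_ite, ite_mul, mul_zero, zero_mul]
  have hcount : {S ∈ powersetCard s (univ : Finset ι) | (fun i => if i ∈ S then α i else 0) = 0} =
      powersetCard s {i | α i = 0} := by
    ext S
    simp only [mem_filter, mem_powersetCard, true_and, funext_iff, Pi.zero_apply,
      ite_eq_right_iff, subset_iff, mem_univ]
    tauto
  simp_rw [hmask, sum_addChar_dotProduct ψ hψ]
  rw [sum_ite, sum_const_zero, add_zero, sum_const, hcount, card_powersetCard, nsmul_eq_mul]

variable {k s n : ℕ} {a : Fin n → F}

lemma dotDFT_noisyCodewordLaw (hψ : ψ ≠ 1) (x α : Fin n → F) :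
    dotDFT ψ (noisyCodewordLaw k s a x) α = noisyCodewordBias k s a α * ψ (α ⬝ᵥ x) := by
  simp only [dotDFT]
  rw [sum_noisyCodewordLaw_mul]
  simp only [dotProduct_add, AddChar.map_add_eq_mul]
  have hfactor : ∑ m : Fin k → F, ∑ S ∈ powersetCard s univ, ∑ e : Fin n → F,
      ψ (α ⬝ᵥ rsEnc k n a m) * ψ (α ⬝ᵥ x) * ψ (α ⬝ᵥ fun i => if i ∈ S then e i else 0) =
      (∑ m : Fin k → F, ψ (α ⬝ᵥ rsEnc k n a m)) *
        (∑ S ∈ powersetCard s univ, ∑ e : Fin n → F,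
          ψ (α ⬝ᵥ fun i => if i ∈ S then e i else 0)) * ψ (α ⬝ᵥ x) := by
    rw [mul_comm _ (ψ (α ⬝ᵥ x)), sum_mul_sum, mul_sum]
    refine sum_congr rfl fun m _ => ?_
    rw [mul_sum]
    refine sum_congr rfl fun S _ => ?_
    rw [mul_sum, mul_sum]
    exact sum_congr rfl fun e _ => by ring
  rw [hfactor, sum_addChar_dotProduct_rsEnc ψ hψ k a α, sum_addChar_dotProduct_noise ψ hψ s α,
    noisyCodewordBias, Fintype.card_fin]
  split_ifs
  · field_simp
  · simp

theorem SD_noisyCodeword_uniform_le [CharP F 2] (hkn : k ≤ n) (hs : s ≤ n)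
    (ha : Function.Injective a) (X : (Fin n → F) → ℝ) (hX : ∑ x, X x = 1) :
    SD (fun w => ∑ x, X x * noisyCodewordLaw k s a x w) (fun _ => 1 / (Fintype.card F : ℝ) ^ n) ≤
      (1 - (k : ℝ) / n) ^ s * √((Fintype.card F : ℝ) ^ n * ∑ x, X x ^ 2) / 2 := by
  obtain ⟨ψ, hψ⟩ := exists_addChar_ne_one F
  set D : (Fin n → F) → ℝ := fun w => ∑ x, X x * noisyCodewordLaw k s a x w
  have hD : ∑ w, D w = 1 := by
    rw [sum_comm]
    simp only [← mul_sum, sum_noisyCodewordLaw hs, mul_one, hX]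
  have hDFT : ∀ α, dotDFT ψ D α = noisyCodewordBias k s a α * dotDFT ψ X α := by
    intro α
    calc dotDFT ψ D α = ∑ x, X x * dotDFT ψ (noisyCodewordLaw k s a x) α := by
          simp only [dotDFT, D, sum_mul, mul_sum, mul_assoc]
          exact sum_comm
      _ = noisyCodewordBias k s a α * dotDFT ψ X α := by
          simp only [dotDFT_noisyCodewordLaw ψ hψ]
          simp only [dotDFT, mul_sum]
          exact sum_congr rfl fun x _ => by ring
  calc SD D (fun _ => 1 / (Fintype.card F : ℝ) ^ n)
      ≤ √(∑ α ∈ univ.erase 0, dotDFT ψ D α ^ 2) / 2 := by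
        simpa using SD_uniform_le_sqrt_sum_dotDFT_sq ψ hψ D hD
    _ ≤ √(((1 - (k : ℝ) / n) ^ s) ^ 2 * ∑ α, dotDFT ψ X α ^ 2) / 2 := by
        gcongr
        rw [mul_sum]
        refine (sum_le_sum fun α hα => ?_).trans
          (sum_le_sum_of_subset_of_nonneg (erase_subset _ _) fun _ _ _ => by positivity)
        rw [hDFT, mul_pow, ← sq_abs (noisyCodewordBias k s a α)]
        gcongr
        exact abs_noisyCodewordBias_le hkn ha (ne_of_mem_erase hα)
    _ = (1 - (k : ℝ) / n) ^ s * √((Fintype.card F : ℝ) ^ n * ∑ x, X x ^ 2) / 2 := by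
        rw [sum_dotDFT_sq ψ hψ, Fintype.card_fin, Real.sqrt_mul (sq_nonneg _),
          Real.sqrt_sq (one_sub_div_pow_nonneg hkn s)]

end NoisyCodewordFourier

lemma sum_sum_ite_eq_mul {α β : Type*} [Fintype α] [Fintype β] [DecidableEq β] (f : α → β)
    (X : α → ℝ) (g : β → ℝ) :
    ∑ y, (∑ x, if f x = y then X x else 0) * g y = ∑ x, X x * g (f x) := by
  simp only [sum_mul, ite_mul, zero_mul]
  rw [sum_comm]
  simp only [sum_ite_eq, mem_univ, if_true]

lemma SD_seeded_comp_kernel_le {U Q V W : Type*} [Fintype U] [Fintype Q] [Fintype V]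
    [DecidableEq V] [Fintype W] (c : ℝ) (R : U → Q → V) (X : Q → ℝ) (Y : V → ℝ)
    (K : V → W → ℝ) (hK0 : ∀ v w, 0 ≤ K v w) (hK1 : ∀ v, ∑ w, K v w = 1) :
    SD (fun uw : U × W => c * ∑ q, X q * K (R uw.1 q) uw.2)
        (fun uw => c * ∑ v, Y v * K v uw.2) ≤
      SD (fun uv : U × V => c * ∑ q, if R uv.1 q = uv.2 then X q else 0)
        (fun uv => c * Y uv.2) := by
  convert SD_comp_kernel_le _ _ K hK0 hK1 using 2 <;> funext uw <;>
    simp only [mul_assoc, ← mul_sum]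
  rw [sum_sum_ite_eq_mul]

def vecOfEquiv {F : Type*} (ℓ n : ℕ) (toF : (Fin ℓ → ZMod 2) ≃ F) :
    (Fin (n * ℓ) → ZMod 2) ≃ (Fin n → F) :=
  (finProdFinEquiv.symm.arrowCongr (Equiv.refl _)).trans
    ((Equiv.curry _ _ _).trans ((Equiv.refl _).arrowCongr toF))

lemma coe_vecOfEquiv {F : Type*} (ℓ n : ℕ) (toF : (Fin ℓ → ZMod 2) ≃ F) :
    ⇑(vecOfEquiv ℓ n toF) = vecOf ℓ n toF :=
  rfl

theorem SD_sampledNoisyCodeword_uniform_le {F : Type*} [Field F] [Fintype F] [DecidableEq F]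
    {β k ℓ n r s : ℕ} {η k'' : ℝ} (hkn : k ≤ n) (hs : s ≤ n) (hF : Fintype.card F = 2 ^ ℓ)
    {a : Fin n → F} (ha : Function.Injective a) (toF : (Fin ℓ → ZMod 2) ≃ F)
    (samp : (Fin r → ZMod 2) → {S : Finset (Fin β) // S.card = n * ℓ})
    (X : (Fin β → ZMod 2) → ℝ) (Y : (Fin (n * ℓ) → ZMod 2) → ℝ) (hY0 : ∀ y, 0 ≤ Y y)
    (hY1 : ∑ y, Y y = 1) (hYent : k'' ≤ minEntropy Y)
    (hXY : SD (fun uy : (Fin r → ZMod 2) × (Fin (n * ℓ) → ZMod 2) =>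
        (1 / 2 ^ r) * ∑ x, if restrict x (samp uy.1).1 (samp uy.1).2 = uy.2 then X x else 0)
      (fun uy => (1 / 2 ^ r) * Y uy.2) ≤ η) :
    SD (fun uw : (Fin r → ZMod 2) × (Fin n → F) => (1 / 2 ^ r) * ∑ q, X q *
        noisyCodewordLaw k s a (vecOf ℓ n toF (restrict q (samp uw.1).1 (samp uw.1).2)) uw.2)
      (fun _ => (1 / 2 ^ r) * (1 / 2 ^ (n * ℓ))) ≤
      η + (2 : ℝ) ^ (((n * ℓ : ℝ) - k'') / 2 - 1) * (1 - (k : ℝ) / n) ^ s := by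
  have : CharP F 2 := charP_of_card_eq_prime_pow hF
  set e := vecOfEquiv ℓ n toF (F := F)
  have hsource : ∀ w, ∑ y, Y y * noisyCodewordLaw k s a (vecOf ℓ n toF y) w =
      ∑ x, Y (e.symm x) * noisyCodewordLaw k s a x w := fun w => by
    rw [← e.sum_comp]
    simp only [Equiv.symm_apply_apply]
    simp only [e, coe_vecOfEquiv]
  have hq : (Fintype.card F : ℝ) ^ n = 2 ^ (n * ℓ) := by
    rw [hF]
    push_cast
    ring
  have hcoll : ∑ x, Y (e.symm x) ^ 2 ≤ 2 ^ (-k'') := by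
    rw [e.symm.sum_comp (fun y => Y y ^ 2)]
    exact sum_sq_le_of_le_minEntropy hY0 hY1 hYent
  calc _ ≤ _ + _ := SD_triangle _ (fun uw => (1 / 2 ^ r) *
        ∑ y, Y y * noisyCodewordLaw k s a (vecOf ℓ n toF y) uw.2) _
    _ ≤ η + (1 - (k : ℝ) / n) ^ s * √((2 : ℝ) ^ (n * ℓ) * 2 ^ (-k'')) / 2 := by
        gcongr
        · exact (SD_seeded_comp_kernel_le _ (fun u q => restrict q (samp u).1 (samp u).2) X Y _
            (fun _ => noisyCodewordLaw_nonneg _) (fun _ => sum_noisyCodewordLaw hs _)).trans hXY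
        · refine (SD_const_mul_snd (U := Fin r → ZMod 2) (1 / 2 ^ r : ℝ) (by positivity)
            (fun w => ∑ y, Y y * noisyCodewordLaw k s a (vecOf ℓ n toF y) w)
            fun _ => 1 / 2 ^ (n * ℓ)).trans_le ?_
          have hcard : (Fintype.card (Fin r → ZMod 2) : ℝ) * (1 / 2 ^ r) = 1 := by simp
          simp only [hcard, one_mul, hsource, ← hq]
          refine (SD_noisyCodeword_uniform_le hkn hs ha _ (by rw [e.symm.sum_comp, hY1])).trans ?_
          have := one_sub_div_pow_nonneg hkn s
          gcongr
    _ = η + (2 : ℝ) ^ (((n * ℓ : ℝ) - k'') / 2 - 1) * (1 - (k : ℝ) / n) ^ s := by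
        rw [← Real.rpow_natCast 2 (n * ℓ), ← Real.rpow_add two_pos, Real.sqrt_eq_rpow,
          ← Real.rpow_mul zero_le_two, Real.rpow_sub two_pos, Real.rpow_one]
        push_cast
        ring_nf

theorem perturbed_instance_hides_message_general
    (β k ℓ n r₂ pm : ℕ) (hkn : k ≤ n) (s : ℕ) (hs : s ≤ n)
    (t : ℝ) (η : ℝ) (k'' : ℝ)
    (F : Type*) [Field F] [Fintype F] [DecidableEq F] (hF : Fintype.card F = 2 ^ ℓ)
    (a : Fin n → F) (ha : Function.Injective a)
    (toF : (Fin ℓ → ZMod 2) ≃ F)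
    (samp₂ : (Fin r₂ → ZMod 2) → {S : Finset (Fin β) // S.card = n * ℓ})
    (hsamp₂ : ∀ X : (Fin β → ZMod 2) → ℝ, (∀ x, 0 ≤ X x) → (∑ x, X x = 1) →
      (β : ℝ) - pm - t ≤ minEntropy X →
      ∃ Y : (Fin (n * ℓ) → ZMod 2) → ℝ, (∀ y, 0 ≤ Y y) ∧ (∑ y, Y y = 1) ∧
        k'' ≤ minEntropy Y ∧
        SD (fun uy : (Fin r₂ → ZMod 2) × (Fin (n * ℓ) → ZMod 2) =>
              (1 / 2 ^ r₂) *
                ∑ x, if restrict x (samp₂ uy.1).1 (samp₂ uy.1).2 = uy.2 then X x else 0)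
          (fun uy => (1 / 2 ^ r₂) * Y uy.2) ≤ η)
    (B : Type*) [Fintype B]
    (p : (Fin β → ZMod 2) × B → ℝ)
    (hp0 : ∀ w, 0 ≤ p w) (hp1 : ∑ w, p w = 1)
    (hQunif : ∀ q0 : Fin β → ZMod 2, ∑ b, p (q0, b) = 1 / 2 ^ β)
    (hsupp : ((Finset.univ : Finset B).filter (fun b => margZ p b ≠ 0)).card ≤ 2 ^ pm) :
    1 - (2 : ℝ) ^ (-t) ≤
      ∑ z ∈ (Finset.univ : Finset B).filter (fun z =>
          SD (fun uw : (Fin r₂ → ZMod 2) × (Fin n → F) =>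
                (1 / 2 ^ r₂) * ∑ q0 : Fin β → ZMod 2,
                  (p (q0, z) / margZ p z) *
                    (∑ m : Fin k → F,
                      ∑ S ∈ Finset.powersetCard s (Finset.univ : Finset (Fin n)),
                        ∑ e : Fin n → F,
                          (1 / (Fintype.card F : ℝ) ^ k) * (1 / (n.choose s : ℝ)) *
                            (1 / (Fintype.card F : ℝ) ^ n) *
                            (if (fun i => rsEnc k n a m i +
                                  vecOf ℓ n toF
                                    (restrict q0 (samp₂ uw.1).1 (samp₂ uw.1).2) i +
                                  (if i ∈ S then e i else 0)) = uw.2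
                              then 1 else 0)))
              (fun _ => (1 / 2 ^ r₂) * (1 / 2 ^ (n * ℓ))) ≤
            η + (2 : ℝ) ^ (((n * ℓ : ℝ) - k'') / 2 - 1) * (1 - (k : ℝ) / n) ^ s),
        margZ p z := by
  set τ : ℝ := 2 ^ (-(pm : ℝ) - t)
  have hτ : 0 < τ := by positivity
  have hheavy : 1 - (2 : ℝ) ^ (-t) ≤ ∑ z with τ ≤ margZ p z, margZ p z := by
    convert one_sub_mul_le_sum_filter_le (sum_margZ.trans hp1) hsupp hτ.le using 2
    rw [Nat.cast_pow, Nat.cast_ofNat, ← Real.rpow_natCast, ← Real.rpow_add two_pos]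
    ring_nf
  refine hheavy.trans (sum_le_sum_of_subset_of_nonneg (monotone_filter_right _ fun z _ hτz => ?_)
    fun z _ _ => margZ_nonneg hp0 z)
  have hz : margZ p z ≠ 0 := (hτ.trans_le hτz).ne'
  have hcond : ∀ q, p (q, z) / margZ p z ≤ 2 ^ (-((β : ℝ) - pm - t)) := fun q => by
    refine (div_margZ_le hp0 hQunif hτ hτz q).trans_eq ?_
    rw [one_div, ← Real.rpow_natCast, ← Real.rpow_neg zero_le_two, ← Real.rpow_sub two_pos]
    ring_nf
  obtain ⟨Y, hY0, hY1, hYent, hXY⟩ := hsamp₂ _ (fun q => div_nonneg (hp0 _) (margZ_nonneg hp0 z))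
    (sum_div_margZ hz) ((le_minEntropy_iff (sum_div_margZ hz)).mpr hcond)
  exact SD_sampledNoisyCodeword_uniform_le hkn hs hF ha toF samp₂ _ Y hY0 hY1 hYent hXY

/-- **The perturbed instance hides the message from a small model.**
`Q` is a uniform `β`-bit key; the model `Z` (arbitrary, jointly distributed with `Q`)
has support of size at most `2^p`; `m` is a uniform message, and `ρ` is the random-subset
noise on `s` out of `n` coordinates.  Under the stated sampler property of `samp₂`, with
probability at least `1 - 2^(-t)` over `z ← Z`, the conditional distribution of
`(u₂, Enc(m) + Q|_{samp₂(u₂)} + ρ)` given `Z = z` is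
`(η + 2^((nℓ-k'')/2-1)·(1-R)^s)`-close to `(u₂, uniform)`, where `R = k/n`. -/
theorem perturbed_instance_hides_message
    (β k ℓ n r₂ pm : ℕ) (hkn : k ≤ n) (hn : n ≤ 2 ^ ℓ) (s : ℕ) (hs : s ≤ n)
    (t : ℝ) (ht : 0 < t) (η : ℝ) (hη : 0 ≤ η) (k'' : ℝ) (hk'' : 0 ≤ k'')
    (F : Type*) [Field F] [Fintype F] [DecidableEq F] (hF : Fintype.card F = 2 ^ ℓ)
    (a : Fin n → F) (ha : Function.Injective a)
    (toF : (Fin ℓ → ZMod 2) ≃ F)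
    (samp₂ : (Fin r₂ → ZMod 2) → {S : Finset (Fin β) // S.card = n * ℓ})
    (hsamp₂ : ∀ X : (Fin β → ZMod 2) → ℝ, (∀ x, 0 ≤ X x) → (∑ x, X x = 1) →
      (β : ℝ) - pm - t ≤ minEntropy X →
      ∃ Y : (Fin (n * ℓ) → ZMod 2) → ℝ, (∀ y, 0 ≤ Y y) ∧ (∑ y, Y y = 1) ∧
        k'' ≤ minEntropy Y ∧
        SD (fun uy : (Fin r₂ → ZMod 2) × (Fin (n * ℓ) → ZMod 2) =>
              (1 / 2 ^ r₂) *
                ∑ x, if restrict x (samp₂ uy.1).1 (samp₂ uy.1).2 = uy.2 then X x else 0)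
          (fun uy => (1 / 2 ^ r₂) * Y uy.2) ≤ η)
    (B : Type*) [Fintype B]
    (p : (Fin β → ZMod 2) × B → ℝ)
    (hp0 : ∀ w, 0 ≤ p w) (hp1 : ∑ w, p w = 1)
    (hQunif : ∀ q0 : Fin β → ZMod 2, ∑ b, p (q0, b) = 1 / 2 ^ β)
    (hsupp : ((Finset.univ : Finset B).filter (fun b => margZ p b ≠ 0)).card ≤ 2 ^ pm) :
    1 - (2 : ℝ) ^ (-t) ≤
      ∑ z ∈ (Finset.univ : Finset B).filter (fun z =>
          SD (fun uw : (Fin r₂ → ZMod 2) × (Fin n → F) =>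
                (1 / 2 ^ r₂) * ∑ q0 : Fin β → ZMod 2,
                  (p (q0, z) / margZ p z) *
                    (∑ m : Fin k → F,
                      ∑ S ∈ Finset.powersetCard s (Finset.univ : Finset (Fin n)),
                        ∑ e : Fin n → F,
                          (1 / (Fintype.card F : ℝ) ^ k) * (1 / (n.choose s : ℝ)) *
                            (1 / (Fintype.card F : ℝ) ^ n) *
                            (if (fun i => rsEnc k n a m i +
                                  vecOf ℓ n toF
                                    (restrict q0 (samp₂ uw.1).1 (samp₂ uw.1).2) i +
                                  (if i ∈ S then e i else 0)) = uw.2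
                              then 1 else 0)))
              (fun _ => (1 / 2 ^ r₂) * (1 / 2 ^ (n * ℓ))) ≤
            η + (2 : ℝ) ^ (((n * ℓ : ℝ) - k'') / 2 - 1) * (1 - (k : ℝ) / n) ^ s),
        margZ p z :=
  perturbed_instance_hides_message_general β k ℓ n r₂ pm hkn s hs t η k'' F hF a ha toF samp₂ hsamp₂
    B p hp0 hp1 hQunif hsupp
end
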